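/- arXiv:1811.06803 — 8 statements merged into one kernel-verified Lean document; each statement's English description precedes it below -/
import Mathlib

section
/- For every finite simple graph G, the pseudoarboricity and arboricity satisfy p(G) ≤ Γ(G) ≤ p(G) + 1. -/
open SimpleGraph

/-- An edge set spans a forest if the graph it spans contains no cycle. -/
def IsForestSet {V : Type*} (F : Set (Sym2 V)) : Prop :=
  (SimpleGraph.fromEdgeSet F).IsAcyclic

/-- A simple graph is a pseudoforest if every connected component contains at most one
cycle, i.e., any two cycles lying in the same connected component have the same edges. -/
def GraphIsPseudoforest {V : Type*} (H : SimpleGraph V) : Prop :=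
  ∀ ⦃u v : V⦄ (c : H.Walk u u) (d : H.Walk v v),
    c.IsCycle → d.IsCycle → H.Reachable u v → ∀ e : Sym2 V, e ∈ c.edges ↔ e ∈ d.edges

/-- An edge set is a pseudoforest if every connected component of the graph it spans
contains at most one cycle. -/
def IsPseudoforestSet {V : Type*} (P : Set (Sym2 V)) : Prop :=
  GraphIsPseudoforest (SimpleGraph.fromEdgeSet P)

/-- A partition of the edge set of `G` into `k` forests. -/
def IsForestPartition {V : Type*} (G : SimpleGraph V) (k : ℕ)
    (F : Fin k → Set (Sym2 V)) : Prop :=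
  (∀ i, IsForestSet (F i)) ∧ (Pairwise fun i j => Disjoint (F i) (F j)) ∧
    (⋃ i, F i) = G.edgeSet

/-- A partition of the edge set of `G` into `k` pseudoforests. -/
def IsPseudoforestPartition {V : Type*} (G : SimpleGraph V) (k : ℕ)
    (P : Fin k → Set (Sym2 V)) : Prop :=
  (∀ i, IsPseudoforestSet (P i)) ∧ (Pairwise fun i j => Disjoint (P i) (P j)) ∧
    (⋃ i, P i) = G.edgeSet

/-- The arboricity of `G`: the minimum number of forests that the edge set of `G` can
be partitioned into. -/
noncomputable def arboricity {V : Type*} (G : SimpleGraph V) : ℕ :=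
  sInf {k | ∃ F : Fin k → Set (Sym2 V), IsForestPartition G k F}

/-- The pseudoarboricity of `G`: the minimum number of pseudoforests that the edge set
of `G` can be partitioned into. -/
noncomputable def pseudoarboricity {V : Type*} (G : SimpleGraph V) : ℕ :=
  sInf {k | ∃ P : Fin k → Set (Sym2 V), IsPseudoforestPartition G k P}

/-!
`p(G) ≤ Γ(G)` because every forest is a pseudoforest.

For `Γ(G) ≤ p(G) + 1` we go through the Nash-Williams criterion. A pseudoforest has at most `|U|`
edges inside a vertex set `U` (each connected component carries at most one edge beyond a spanning
tree), so `G` has at most `min (p |U|) (|U| (|U| - 1)) ≤ (p + 1) (|U| - 1)` edges inside `U`.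
Conversely, if `G` has at most `k (|U| - 1)` edges inside every `U`, its edges can be coloured by
`k` forests: colour them one at a time and, to insert an uncoloured edge `e`, close `{e}` under
"every edge of the forest path between the endpoints of a closure edge". If some closure edge joins
two components of some colour class, recolouring along a shortest derivation of that edge inserts
`e` (matroid partition augmentation). Otherwise every colour class spans the component `U` of the
closure, which then contains `k (|U| - 1) + 1` edges of `G`.
-/

open Finset SimpleGraph

section

variable {V W ι : Type*}

namespace SimpleGraph

theorem connected_induce_reachable (H : SimpleGraph V) (u : V) :
    (H.induce {v | H.Reachable u v}).Connected := by
  have hsupp : (H.connectedComponentMk u).supp = {v | H.Reachable u v} := by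
    ext v
    simp [ConnectedComponent.mem_supp_iff, ConnectedComponent.eq, reachable_comm]
  exact hsupp ▸ (H.connectedComponentMk u).connected_toSimpleGraph

theorem IsAcyclic.not_reachable_deleteEdges {H : SimpleGraph V} (hH : H.IsAcyclic) {u v : V}
    {w : H.Walk u v} (hw : w.IsPath) {e : Sym2 V} (he : e ∈ w.edges) :
    ¬ (H.deleteEdges {e}).Reachable u v := by
  classical
  rintro ⟨p⟩
  have hpath : w = (p.toPath : (H.deleteEdges {e}).Walk u v).mapLe (H.deleteEdges_le {e}) :=
    congrArg Subtype.val <|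
      (hH.subsingleton_path u v).elim ⟨w, hw⟩ ⟨_, p.toPath.2.mapLe (H.deleteEdges_le {e})⟩
  have hmem : e ∈ (p.toPath : (H.deleteEdges {e}).Walk u v).edges := by
    rwa [hpath, Walk.edges_mapLe_eq_edges] at he
  simpa using Walk.edges_subset_edgeSet _ hmem

section Card

variable [Fintype V] [DecidableEq V] {H : SimpleGraph V} [Fintype H.edgeSet]

theorem card_edgeFinset_inter_sym2 (s : Finset V) :
    #(H.edgeFinset ∩ s.sym2) = Nat.card (H.induce s).edgeSet := by
  classical
  have := card_filter_edgeFinset_toFinset_subset (G := H) s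
  rw [filter_edgeFinset_toFinset_subset, ← SimpleGraph.card_edgeSet,
    ← Nat.card_eq_fintype_card] at this
  convert this using 3
  ext
  simp

theorem card_edgeFinset_inter_sym2_le_mul (s : Finset V) :
    #(H.edgeFinset ∩ s.sym2) ≤ #s * (#s - 1) := by
  classical
  calc #(H.edgeFinset ∩ s.sym2) = #(H.induce s).edgeFinset := by
        rw [card_edgeFinset_inter_sym2, Nat.card_eq_fintype_card, SimpleGraph.card_edgeSet]
    _ ≤ (Fintype.card s).choose 2 := card_edgeFinset_le_card_choose_two
    _ ≤ #s * (#s - 1) := by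
      rw [Fintype.card_coe, Nat.choose_two_right]
      exact Nat.div_le_self _ 2

theorem card_le_card_edgeFinset_inter_sym2_add_one {s : Finset V} {u : V}
    (hs : ∀ v, v ∈ s ↔ H.Reachable u v) : #s ≤ #(H.edgeFinset ∩ s.sym2) + 1 := by
  have hset : (s : Set V) = {v | H.Reachable u v} := Set.ext hs
  have := (hset ▸ H.connected_induce_reachable u).card_vert_le_card_edgeSet_add_one
  rwa [Nat.card_coe_set_eq, Set.ncard_coe_finset, ← card_edgeFinset_inter_sym2] at this

end Card

end SimpleGraph

theorem IsForestSet.isPseudoforestSet {F : Set (Sym2 V)} (hF : IsForestSet F) :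
    IsPseudoforestSet F :=
  fun _ _ c _ hc => (hF c hc).elim

namespace GraphIsPseudoforest

theorem comap {H : SimpleGraph V} {H' : SimpleGraph W} (f : H' →g H)
    (hf : Function.Injective f) (hH : GraphIsPseudoforest H) : GraphIsPseudoforest H' := by
  intro u v c d hc hd huv e
  have := hH (c.map f) (d.map f) (hc.map hf) (hd.map hf) (huv.map f) (Sym2.map f e)
  simpa only [Walk.edges_map, List.mem_map_of_injective (Sym2.map.injective hf)] using this

theorem anti {H H' : SimpleGraph V} (hle : H' ≤ H) (hH : GraphIsPseudoforest H) :
    GraphIsPseudoforest H' :=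
  hH.comap (Hom.ofLE hle) Function.injective_id

theorem isAcyclic_deleteEdges {H : SimpleGraph V} (hH : GraphIsPseudoforest H)
    (hconn : H.Connected) {u : V} {c : H.Walk u u} (hc : c.IsCycle) {e : Sym2 V}
    (he : e ∈ c.edges) : (H.deleteEdges {e}).IsAcyclic := by
  intro v d hd
  have hed := (hH c _ hc (hd.mapLe (H.deleteEdges_le {e})) (hconn u v) e).1 he
  rw [Walk.edges_mapLe_eq_edges] at hed
  simpa using d.edges_subset_edgeSet hed

theorem card_edgeSet_le_of_connected [Finite V] {H : SimpleGraph V}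
    (hH : GraphIsPseudoforest H) (hconn : H.Connected) : Nat.card H.edgeSet ≤ Nat.card V := by
  by_cases hac : H.IsAcyclic
  · have := (isTree_iff_connected_and_card.1 ⟨hconn, hac⟩).2
    omega
  simp only [IsAcyclic, not_forall, not_not] at hac
  obtain ⟨u, c, hc⟩ := hac
  obtain ⟨e, he⟩ := List.exists_mem_of_ne_nil c.edges (by simpa using hc.ne_nil)
  induction e using Sym2.ind with | _ x y => ?_
  -- an edge of the cycle is no bridge, and deleting it leaves a spanning tree
  have htree := isTree_iff_connected_and_card.1
    ⟨hconn.connected_delete_edge_of_not_isBridge fun hb => hb.notMem_edges_of_isCycle hc he,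
      hH.isAcyclic_deleteEdges hconn hc he⟩
  rw [edgeSet_deleteEdges, Nat.card_coe_set_eq, Set.ncard_sdiff_singleton_add_one
    (c.edges_subset_edgeSet he), ← Nat.card_coe_set_eq] at htree
  omega

variable [Fintype V] [DecidableEq V] {H : SimpleGraph V} [Fintype H.edgeSet]

theorem card_edgeFinset_inter_sym2_le_of_reachable (hH : GraphIsPseudoforest H) {s : Finset V}
    {u : V} (hs : ∀ v, v ∈ s ↔ H.Reachable u v) : #(H.edgeFinset ∩ s.sym2) ≤ #s := by
  have hset : (s : Set V) = {v | H.Reachable u v} := Set.ext hs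
  rw [card_edgeFinset_inter_sym2, ← Set.ncard_coe_finset, ← Nat.card_coe_set_eq]
  have hind := Embedding.induce (G := H) (s : Set V)
  exact (hH.comap hind.toHom hind.injective).card_edgeSet_le_of_connected
    (hset ▸ H.connected_induce_reachable u)

theorem card_edgeFinset_inter_sym2_le (hH : GraphIsPseudoforest H) (U : Finset V) :
    #(H.edgeFinset ∩ U.sym2) ≤ #U := by
  induction U using Finset.strongInduction generalizing H with | H U ih => ?_
  obtain rfl | ⟨u, hu⟩ := U.eq_empty_or_nonempty
  · simp
  classical
  -- `s` is the component of `u` in the part `K` of `H` inside `U`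
  set K := H.deleteEdges (↑U.sym2)ᶜ
  have hKH : GraphIsPseudoforest K := hH.anti (H.deleteEdges_le _)
  set s : Finset V := {v | K.Reachable u v}
  have hs : ∀ v, v ∈ s ↔ K.Reachable u v := by simp [s]
  have hsU : s ⊆ U := by
    intro v hv
    obtain rfl | hne := eq_or_ne v u
    · exact hu
    obtain ⟨w, hvw⟩ := mem_support_of_reachable hne ((hs v).1 hv).symm
    simp only [K, deleteEdges_adj, Set.mem_compl_iff, mem_coe, mk_mem_sym2_iff, not_not] at hvw
    exact hvw.2.1
  have hsplit : H.edgeFinset ∩ U.sym2 ⊆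
      (K.edgeFinset ∩ s.sym2) ∪ (K.edgeFinset ∩ (U \ s).sym2) := by
    intro f hf
    induction f using Sym2.ind with | _ x y => ?_
    simp only [mem_inter, mem_edgeFinset, mem_edgeSet, mk_mem_sym2_iff] at hf
    have hK : K.Adj x y := by simp [K, hf.1, hf.2]
    by_cases hx : x ∈ s
    · exact mem_union_left _ (by simp [hK, hx, (hs y).2 (((hs x).1 hx).trans hK.reachable)])
    · have hy : y ∉ s := fun hy => hx ((hs x).2 (((hs y).1 hy).trans hK.symm.reachable))
      exact mem_union_right _ (by simp [hK, hx, hy, hf.2])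
  calc #(H.edgeFinset ∩ U.sym2)
      ≤ #(K.edgeFinset ∩ s.sym2) + #(K.edgeFinset ∩ (U \ s).sym2) :=
        (card_le_card hsplit).trans (card_union_le _ _)
    _ ≤ #s + #(U \ s) :=
        add_le_add (hKH.card_edgeFinset_inter_sym2_le_of_reachable hs)
          (ih _ (sdiff_ssubset hsU ⟨u, (hs u).2 .rfl⟩) hKH)
    _ = #U := by rw [add_comm, card_sdiff_add_card_eq_card hsU]

end GraphIsPseudoforest

/-- Partial edge colourings are maps `Sym2 V → Option ι`, with `none` for uncoloured edges. -/
def colorGraph (φ : Sym2 V → Option ι) (i : ι) : SimpleGraph V :=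
  fromEdgeSet {f | φ f = some i}

@[simp] theorem mem_edgeSet_colorGraph {φ : Sym2 V → Option ι} {i : ι} {f : Sym2 V} :
    f ∈ (colorGraph φ i).edgeSet ↔ φ f = some i ∧ ¬ f.IsDiag := by
  simp [colorGraph]

namespace colorGraph

variable [DecidableEq (Sym2 V)] {φ : Sym2 V → Option ι}

theorem update_le (g : Sym2 V) (c : Option ι) (i : ι) :
    colorGraph (Function.update φ g c) i ≤ colorGraph φ i ⊔ fromEdgeSet {g} := by
  rw [colorGraph, colorGraph, ← fromEdgeSet_union]
  refine fromEdgeSet_mono fun f hf => ?_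
  by_cases hfg : f = g
  · exact Or.inr hfg
  · exact Or.inl (by simpa [Function.update_of_ne hfg] using hf)

theorem update_le_deleteEdges (g : Sym2 V) {c : Option ι} {i : ι} (hc : c ≠ some i) :
    colorGraph (Function.update φ g c) i ≤ (colorGraph φ i).deleteEdges {g} := by
  rw [colorGraph, colorGraph, deleteEdges_fromEdgeSet]
  refine fromEdgeSet_mono fun f hf => ?_
  by_cases hfg : f = g
  · subst hfg
    simp_all
  · exact ⟨by simpa [Function.update_of_ne hfg] using hf, hfg⟩

theorem isAcyclic_update (hφ : ∀ j, (colorGraph φ j).IsAcyclic) {i : ι} {a b : V}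
    (hab : ¬ (colorGraph φ i).Reachable a b) (j : ι) :
    (colorGraph (Function.update φ s(a, b) (some i)) j).IsAcyclic := by
  by_cases hij : i = j
  · subst hij
    exact ((hφ i).sup_edge_of_not_reachable hab).anti (update_le _ _ _)
  · exact (hφ j).anti ((update_le_deleteEdges _ (by simpa using hij)).trans (deleteEdges_le _))

end colorGraph

inductive Derives (φ : Sym2 V → Option ι) (e : Sym2 V) : Sym2 V → ℕ → Prop
  | refl : Derives φ e e 0
  | step {a b : V} {f : Sym2 V} {n : ℕ} (i : ι) (w : (colorGraph φ i).Walk a b) :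
      Derives φ e s(a, b) n → w.IsPath → f ∈ w.edges → Derives φ e f (n + 1)

namespace Derives

variable [DecidableEq (Sym2 V)] {φ : Sym2 V → Option ι} {e : Sym2 V}

theorem update {f g : Sym2 V} {n : ℕ} (c : Option ι) (h : Derives φ e f n)
    (hg : ∀ m ≤ n, ¬ Derives φ e g m) : Derives (Function.update φ g c) e f n := by
  induction h with
  | refl => exact .refl
  | step i w hprev hw hf ih =>
    have hw' : ∀ h ∈ w.edges, h ∈ (colorGraph (Function.update φ g c) i).edgeSet := by
      intro h hh
      have hne : h ≠ g := by
        rintro rfl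
        exact hg _ le_rfl (.step i w hprev hw hh)
      simpa [Function.update_of_ne hne] using w.edges_subset_edgeSet hh
    exact .step i (w.transfer _ hw') (ih fun m hm => hg m (by omega)) (hw.transfer hw')
      (by rwa [Walk.edges_transfer])

/-- Recolour `s(a, b)` with `i` and recurse on the edge whose colour-class path contained it.
Taking `n` minimal keeps `s(a, b)` off all shorter derivations, so these survive the recolouring. -/
theorem exists_extend (hφ : ∀ i, (colorGraph φ i).IsAcyclic) {a b : V} {n : ℕ} {i : ι}
    (hd : Derives φ e s(a, b) n) (hab : ¬ (colorGraph φ i).Reachable a b) :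
    ∃ ψ : Sym2 V → Option ι, (∀ j, (colorGraph ψ j).IsAcyclic) ∧
      ∀ f, (ψ f).isSome ↔ (φ f).isSome ∨ f = e := by
  induction n using Nat.strong_induction_on generalizing φ a b i with | _ n ih => ?_
  by_cases hshort : ∃ m < n, Derives φ e s(a, b) m
  · obtain ⟨m, hm, hd'⟩ := hshort
    exact ih m hm hφ hd' hab
  push Not at hshort
  set ψ := Function.update φ s(a, b) (some i)
  have hψ : ∀ j, (colorGraph ψ j).IsAcyclic := colorGraph.isAcyclic_update hφ hab
  have hψcol : ∀ f, (ψ f).isSome ↔ (φ f).isSome ∨ f = s(a, b) := by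
    intro f
    by_cases hf : f = s(a, b) <;> simp [ψ, hf]
  cases hd with
  | refl => exact ⟨ψ, hψ, hψcol⟩
  | step j w hprev hw hmem =>
    have hφj : φ s(a, b) = some j := (mem_edgeSet_colorGraph.1 (w.edges_subset_edgeSet hmem)).1
    have hij : some i ≠ some j := by
      rintro ⟨⟩
      exact hab (Adj.reachable (w.adj_of_mem_edges hmem))
    obtain ⟨ψ', hψ', hcol⟩ := ih _ (Nat.lt_succ_self _) hψ
      (hprev.update _ fun m hm => hshort m (by omega))
      fun h => (hφ j).not_reachable_deleteEdges hw hmem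
        (h.mono (colorGraph.update_le_deleteEdges _ hij))
    refine ⟨ψ', hψ', fun f => ?_⟩
    rw [hcol, hψcol]
    constructor
    · rintro ((h | rfl) | rfl)
      exacts [Or.inl h, Or.inl (by simp [hφj]), Or.inr rfl]
    · rintro (h | rfl)
      exacts [Or.inl (Or.inl h), Or.inr rfl]

end Derives

def derivedGraph (φ : Sym2 V → Option ι) (e : Sym2 V) : SimpleGraph V :=
  fromEdgeSet {g | ∃ n, Derives φ e g n}

section Stuck

variable {φ : Sym2 V → Option ι} {e : Sym2 V}

theorem reachable_derivedGraph_inf_colorGraph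
    (hstuck : ∀ a b n i, Derives φ e s(a, b) n → (colorGraph φ i).Reachable a b) (i : ι) :
    (derivedGraph φ e ⊓ colorGraph φ i).Reachable = (derivedGraph φ e).Reachable := by
  classical
  have hadj : ∀ x y, (derivedGraph φ e).Adj x y →
      (derivedGraph φ e ⊓ colorGraph φ i).Reachable x y := by
    intro x y hxy
    obtain ⟨⟨n, hn⟩, -⟩ := (fromEdgeSet_adj _).1 hxy
    obtain ⟨p, hp⟩ := (hstuck x y n i hn).exists_isPath
    refine ⟨p.transfer _ fun f hf => ?_⟩
    have := p.edges_subset_edgeSet hf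
    simp only [colorGraph, derivedGraph, edgeSet_inf, edgeSet_fromEdgeSet] at this ⊢
    exact ⟨⟨⟨n + 1, .step i p hn hp hf⟩, this.2⟩, this⟩
  ext x y
  refine ⟨Reachable.mono inf_le_left, fun hxy => ?_⟩
  rw [reachable_iff_reflTransGen] at hxy ⊢
  exact Relation.reflTransGen_closed
    (fun a b hab => (reachable_iff_reflTransGen _ _).1 (hadj a b hab)) _ _ hxy

theorem exists_card_lt_of_forall_reachable [Fintype V] [DecidableEq V] [Fintype ι]
    {G : SimpleGraph V} [DecidableRel G.Adj] (hφG : ∀ f, (φ f).isSome → f ∈ G.edgeSet)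
    (he : e ∈ G.edgeSet) (hφe : φ e = none)
    (hstuck : ∀ a b n i, Derives φ e s(a, b) n → (colorGraph φ i).Reachable a b) :
    ∃ U : Finset V, Fintype.card ι * (#U - 1) < #(G.edgeFinset ∩ U.sym2) := by
  classical
  induction e using Sym2.ind with | _ a b => ?_
  set R := derivedGraph φ s(a, b)
  set U : Finset V := {v | R.Reachable a v}
  have hU : ∀ v, v ∈ U ↔ R.Reachable a v := by simp [U]
  have hab : R.Adj a b := (fromEdgeSet_adj _).2 ⟨⟨0, .refl⟩, G.ne_of_adj he⟩
  refine ⟨U, ?_⟩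
  set T : ι → Finset (Sym2 V) := fun i => (R ⊓ colorGraph φ i).edgeFinset ∩ U.sym2
  have hT : ∀ i, #U ≤ #(T i) + 1 := fun i => card_le_card_edgeFinset_inter_sym2_add_one
    fun v => by rw [reachable_derivedGraph_inf_colorGraph hstuck i]; exact hU v
  have hTφ : ∀ i, ∀ f ∈ T i, φ f = some i := fun i f hf =>
    (mem_edgeSet_colorGraph.1 (edgeSet_mono inf_le_right (mem_edgeFinset.1 (mem_inter.1 hf).1))).1
  have hdisj : ((univ : Finset ι) : Set ι).PairwiseDisjoint T := by
    intro i _ j _ hij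
    refine Finset.disjoint_left.2 fun f hfi hfj => hij ?_
    simpa [hTφ i f hfi] using hTφ j f hfj
  have hnotin : s(a, b) ∉ univ.biUnion T := by
    simp only [mem_biUnion, mem_univ, true_and, not_exists]
    intro i hi
    simp [hTφ i _ hi] at hφe
  have hsub : insert s(a, b) (univ.biUnion T) ⊆ G.edgeFinset ∩ U.sym2 := by
    refine insert_subset (by simp [he, hU, hab.reachable]) fun f hf => ?_
    obtain ⟨i, -, hfi⟩ := mem_biUnion.1 hf
    exact mem_inter.2 ⟨mem_edgeFinset.2 (hφG f (by simp [hTφ i f hfi])), (mem_inter.1 hfi).2⟩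
  calc Fintype.card ι * (#U - 1) = ∑ _i : ι, (#U - 1) := by simp
    _ ≤ ∑ i, #(T i) := sum_le_sum fun i _ => by have := hT i; omega
    _ < #(insert s(a, b) (univ.biUnion T)) := by
        rw [card_insert_of_notMem hnotin, card_biUnion hdisj]; omega
    _ ≤ #(G.edgeFinset ∩ U.sym2) := card_le_card hsub

end Stuck

theorem exists_colorGraph_isAcyclic [Fintype V] [DecidableEq V] [Fintype ι] {G : SimpleGraph V}
    [DecidableRel G.Adj]
    (hG : ∀ U : Finset V, #(G.edgeFinset ∩ U.sym2) ≤ Fintype.card ι * (#U - 1)) :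
    ∃ φ : Sym2 V → Option ι, (∀ i, (colorGraph φ i).IsAcyclic) ∧
      ∀ f, (φ f).isSome ↔ f ∈ G.edgeSet := by
  suffices h : ∀ S ⊆ G.edgeFinset, ∃ φ : Sym2 V → Option ι, (∀ i, (colorGraph φ i).IsAcyclic) ∧
      ∀ f, (φ f).isSome ↔ f ∈ S by
    simpa using h _ subset_rfl
  intro S hS
  induction S using Finset.induction_on with
  | empty => exact ⟨fun _ => none, fun i => by simp [colorGraph], by simp⟩
  | insert e S heS ih =>
    obtain ⟨φ, hφ, hφS⟩ := ih ((subset_insert _ _).trans hS)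
    have hφG : ∀ f, (φ f).isSome → f ∈ G.edgeSet :=
      fun f hf => mem_edgeFinset.1 (hS (mem_insert_of_mem ((hφS f).1 hf)))
    by_cases hstuck : ∀ a b n i, Derives φ e s(a, b) n → (colorGraph φ i).Reachable a b
    · obtain ⟨U, hU⟩ := exists_card_lt_of_forall_reachable hφG
        (mem_edgeFinset.1 (hS (mem_insert_self _ _))) (by simpa using (hφS e).not.2 heS) hstuck
      exact absurd (hG U) hU.not_ge
    push Not at hstuck
    obtain ⟨a, b, n, i, hd, hab⟩ := hstuck
    obtain ⟨ψ, hψ, hψφ⟩ := hd.exists_extend hφ hab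
    exact ⟨ψ, hψ, fun f => by rw [hψφ, hφS, mem_insert, or_comm]⟩

theorem isForestPartition_of_forall_isAcyclic {k : ℕ} {G : SimpleGraph V}
    {φ : Sym2 V → Option (Fin k)} (hφ : ∀ i, (colorGraph φ i).IsAcyclic)
    (hφG : ∀ f, (φ f).isSome ↔ f ∈ G.edgeSet) :
    IsForestPartition G k fun i => {f | φ f = some i} :=
  ⟨hφ, fun i j hij => Set.disjoint_left.2 fun f hi hj => hij (Option.some.inj (hi.symm.trans hj)),
    Set.ext fun f => by simp [← hφG, Option.isSome_iff_exists]⟩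

theorem exists_isForestPartition_of_card_edgeFinset_inter_sym2_le [Fintype V] [DecidableEq V]
    {G : SimpleGraph V} [DecidableRel G.Adj] {k : ℕ}
    (hG : ∀ U : Finset V, #(G.edgeFinset ∩ U.sym2) ≤ k * (#U - 1)) :
    ∃ F, IsForestPartition G k F := by
  obtain ⟨φ, hφ, hφG⟩ := exists_colorGraph_isAcyclic (ι := Fin k) (by simpa using hG)
  exact ⟨_, isForestPartition_of_forall_isAcyclic hφ hφG⟩

theorem IsForestPartition.isPseudoforestPartition {G : SimpleGraph V} {k : ℕ}
    {F : Fin k → Set (Sym2 V)} (hF : IsForestPartition G k F) : IsPseudoforestPartition G k F :=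
  ⟨fun i => (hF.1 i).isPseudoforestSet, hF.2⟩

namespace IsPseudoforestPartition

variable [Fintype V] [DecidableEq V] {G : SimpleGraph V} [DecidableRel G.Adj] {p : ℕ}
  {P : Fin p → Set (Sym2 V)}

theorem card_edgeFinset_inter_sym2_le (hP : IsPseudoforestPartition G p P) (U : Finset V) :
    #(G.edgeFinset ∩ U.sym2) ≤ p * #U := by
  classical
  have hsub : G.edgeFinset ∩ U.sym2 ⊆
      univ.biUnion fun i => (fromEdgeSet (P i)).edgeFinset ∩ U.sym2 := by
    intro f hf
    obtain ⟨hfG, hfU⟩ := mem_inter.1 hf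
    have hfG := mem_edgeFinset.1 hfG
    obtain ⟨i, hi⟩ := Set.mem_iUnion.1 (hP.2.2 ▸ hfG)
    exact mem_biUnion.2 ⟨i, mem_univ _, by simp [hi, hfU, G.not_isDiag_of_mem_edgeSet hfG]⟩
  calc #(G.edgeFinset ∩ U.sym2) ≤ ∑ i, #((fromEdgeSet (P i)).edgeFinset ∩ U.sym2) :=
        (card_le_card hsub).trans card_biUnion_le
    _ ≤ ∑ _i : Fin p, #U := sum_le_sum fun i _ => (hP.1 i).card_edgeFinset_inter_sym2_le U
    _ = p * #U := by simp

theorem card_edgeFinset_inter_sym2_le_succ_mul (hP : IsPseudoforestPartition G p P)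
    (U : Finset V) : #(G.edgeFinset ∩ U.sym2) ≤ (p + 1) * (#U - 1) := by
  have hp := hP.card_edgeFinset_inter_sym2_le U
  obtain h | h := le_or_gt (#U) p
  · exact (card_edgeFinset_inter_sym2_le_mul U).trans
      (Nat.mul_le_mul_right _ (h.trans p.le_succ))
  · obtain ⟨m, hm⟩ := Nat.exists_eq_add_of_lt h
    rw [hm] at hp ⊢
    rw [Nat.add_sub_cancel]
    nlinarith

end IsPseudoforestPartition

end

theorem pseudoarboricity_le_arboricity_le_succ_general {V : Type*} [Fintype V]
    (G : SimpleGraph V) :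
    pseudoarboricity G ≤ arboricity G ∧ arboricity G ≤ pseudoarboricity G + 1 := by
  classical
  -- `|V|` forests always suffice, so neither infimum is taken over the empty set
  obtain ⟨F, hF⟩ := exists_isForestPartition_of_card_edgeFinset_inter_sym2_le (G := G)
    (k := Fintype.card V) fun U =>
      (card_edgeFinset_inter_sym2_le_mul U).trans (Nat.mul_le_mul_right _ (card_le_univ U))
  have hpseudo : {k | ∃ P, IsPseudoforestPartition G k P}.Nonempty :=
    ⟨_, F, hF.isPseudoforestPartition⟩
  refine ⟨csInf_le_csInf (OrderBot.bddBelow _) ⟨_, F, hF⟩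
    fun k ⟨F, hF⟩ => ⟨F, hF.isPseudoforestPartition⟩, ?_⟩
  obtain ⟨P, hP⟩ := Nat.sInf_mem hpseudo
  exact Nat.sInf_le (exists_isForestPartition_of_card_edgeFinset_inter_sym2_le
    hP.card_edgeFinset_inter_sym2_le_succ_mul)

/-- For every finite simple graph `G`, we have `p(G) ≤ Γ(G) ≤ p(G) + 1`. -/
theorem pseudoarboricity_le_arboricity_le_succ {V : Type*} [Fintype V] [DecidableEq V]
    (G : SimpleGraph V) :
    pseudoarboricity G ≤ arboricity G ∧ arboricity G ≤ pseudoarboricity G + 1 :=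
  pseudoarboricity_le_arboricity_le_succ_general G
end

section
/- Let (V,P) be a finite pseudoforest. Then P can be partitioned into a forest and a matching M such that M contains exactly one edge from each cycle of (V,P). -/
open SimpleGraph

/-- A set of edges is a matching if no two of its edges share an endpoint. -/
def IsMatchingSet {V : Type*} (M : Set (Sym2 V)) : Prop :=
  ∀ e ∈ M, ∀ f ∈ M, e ≠ f → ∀ v : V, v ∈ e → v ∉ f

/-!
In a pseudoforest all cycles of a component have the same edge set, so choosing one edge from
the edge set of each cycle picks a single edge per cyclic component. Two picked edges sharing a
vertex lie in one component and hence coincide, so the picked edges form a matching; every cycle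
contains exactly its picked edge, and deleting the picked edges leaves no cycle.
-/

namespace SimpleGraph

variable {V : Type*} {G : SimpleGraph V} {u v : V}

theorem Walk.IsCycle.edgeSet_nonempty {c : G.Walk u u} (hc : c.IsCycle) : c.edgeSet.Nonempty :=
  List.exists_mem_of_ne_nil c.edges (by simpa using hc.not_nil)

/-- An edge of a cycle, chosen as a function of its edge set only. -/
noncomputable def Walk.IsCycle.someEdge {c : G.Walk u u} (hc : c.IsCycle) : Sym2 V :=
  hc.edgeSet_nonempty.some

theorem Walk.IsCycle.someEdge_mem_edges {c : G.Walk u u} (hc : c.IsCycle) :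
    hc.someEdge ∈ c.edges :=
  hc.edgeSet_nonempty.some_mem

theorem Walk.IsCycle.someEdge_congr {c : G.Walk u u} {d : G.Walk v v} (hc : c.IsCycle)
    (hd : d.IsCycle) (h : c.edgeSet = d.edgeSet) : hc.someEdge = hd.someEdge := by
  unfold Walk.IsCycle.someEdge
  congr 1

variable (G) in
def chosenCycleEdges : Set (Sym2 V) :=
  {e | ∃ (u : V) (c : G.Walk u u) (hc : c.IsCycle), hc.someEdge = e}

theorem someEdge_mem_chosenCycleEdges {c : G.Walk u u} (hc : c.IsCycle) :
    hc.someEdge ∈ G.chosenCycleEdges :=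
  ⟨u, c, hc, rfl⟩

theorem chosenCycleEdges_subset_edgeSet : G.chosenCycleEdges ⊆ G.edgeSet := by
  rintro _ ⟨u, c, hc, rfl⟩
  exact c.edges_subset_edgeSet hc.someEdge_mem_edges

theorem isAcyclic_fromEdgeSet_diff_of_forall_isCycle {M : Set (Sym2 V)}
    (hM : ∀ ⦃u : V⦄ (c : G.Walk u u), c.IsCycle → ∃ e ∈ c.edges, e ∈ M) :
    (fromEdgeSet (G.edgeSet \ M)).IsAcyclic := by
  intro u c hc
  have hF : ∀ e ∈ c.edges, e ∈ G.edgeSet \ M := fun e he ↦ by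
    have he' := c.edges_subset_edgeSet he
    rw [edgeSet_fromEdgeSet] at he'
    exact he'.1
  obtain ⟨e, he, heM⟩ := hM (c.transfer G fun e he ↦ (hF e he).1) (hc.transfer _)
  rw [Walk.edges_transfer] at he
  exact (hF e he).2 heM

theorem isAcyclic_fromEdgeSet_diff_chosenCycleEdges :
    (fromEdgeSet (G.edgeSet \ G.chosenCycleEdges)).IsAcyclic :=
  isAcyclic_fromEdgeSet_diff_of_forall_isCycle fun _ _ hc ↦
    ⟨hc.someEdge, hc.someEdge_mem_edges, someEdge_mem_chosenCycleEdges hc⟩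

end SimpleGraph

namespace GraphIsPseudoforest

variable {V : Type*} {G : SimpleGraph V} {u v x : V}

theorem someEdge_eq_of_mem_support (hG : GraphIsPseudoforest G) {c : G.Walk u u}
    {d : G.Walk v v} (hc : c.IsCycle) (hd : d.IsCycle) (hxc : x ∈ c.support)
    (hxd : x ∈ d.support) : hc.someEdge = hd.someEdge := by
  classical
  have hr : G.Reachable u v := ⟨(c.takeUntil x hxc).append (d.takeUntil x hxd).reverse⟩
  exact hc.someEdge_congr hd (Set.ext (hG c d hc hd hr))

theorem isMatchingSet_chosenCycleEdges (hG : GraphIsPseudoforest G) :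
    IsMatchingSet G.chosenCycleEdges := by
  rintro _ ⟨u, c, hc, rfl⟩ _ ⟨v, d, hd, rfl⟩ hne x hxe hxf
  exact hne <| hG.someEdge_eq_of_mem_support hc hd
    (Walk.mem_support_of_mem_edges hc.someEdge_mem_edges hxe)
    (Walk.mem_support_of_mem_edges hd.someEdge_mem_edges hxf)

theorem existsUnique_mem_edges_chosenCycleEdges (hG : GraphIsPseudoforest G) {c : G.Walk u u}
    (hc : c.IsCycle) : ∃! e : Sym2 V, e ∈ c.edges ∧ e ∈ G.chosenCycleEdges := by
  refine ⟨hc.someEdge, ⟨hc.someEdge_mem_edges, someEdge_mem_chosenCycleEdges hc⟩, ?_⟩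
  rintro _ ⟨he, v, d, hd, rfl⟩
  have hx := hd.someEdge.out_fst_mem
  exact hG.someEdge_eq_of_mem_support hd hc
    (Walk.mem_support_of_mem_edges hd.someEdge_mem_edges hx) (Walk.mem_support_of_mem_edges he hx)

end GraphIsPseudoforest

theorem pseudoforest_partition_forest_matching_general {V : Type*}
    (P : SimpleGraph V) (hP : GraphIsPseudoforest P) :
    ∃ M ⊆ P.edgeSet, IsMatchingSet M ∧
      (SimpleGraph.fromEdgeSet (P.edgeSet \ M)).IsAcyclic ∧
      ∀ ⦃u : V⦄ (c : P.Walk u u), c.IsCycle → ∃! e : Sym2 V, e ∈ c.edges ∧ e ∈ M :=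
  ⟨P.chosenCycleEdges, chosenCycleEdges_subset_edgeSet, hP.isMatchingSet_chosenCycleEdges,
    isAcyclic_fromEdgeSet_diff_chosenCycleEdges,
    fun _ _ hc ↦ hP.existsUnique_mem_edges_chosenCycleEdges hc⟩

/-- A finite pseudoforest `(V, P)` can be partitioned into a forest and a matching `M`
such that `M` contains exactly one edge from each cycle of `(V, P)`. -/
theorem pseudoforest_partition_forest_matching {V : Type*} [Fintype V] [DecidableEq V]
    (P : SimpleGraph V) (hP : GraphIsPseudoforest P) :
    ∃ M ⊆ P.edgeSet, IsMatchingSet M ∧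
      (SimpleGraph.fromEdgeSet (P.edgeSet \ M)).IsAcyclic ∧
      ∀ ⦃u : V⦄ (c : P.Walk u u), c.IsCycle → ∃! e : Sym2 V, e ∈ c.edges ∧ e ∈ M :=
  pseudoforest_partition_forest_matching_general P hP
end

section
/- Every finite simple graph G = (V,E) with maximum degree at most 3 admits a partition of its edge set into two linear forests, i.e., E = L₁ ⊍ L₂ where each Lᵢ is a linear forest. -/
open SimpleGraph

/-- A set of edges is a linear forest if it spans an acyclic graph in which every
vertex has degree at most two. -/
def IsLinearForestSet {V : Type*} (L : Set (Sym2 V)) : Prop :=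
  (SimpleGraph.fromEdgeSet L).IsAcyclic ∧ ∀ v : V, {e ∈ L | v ∈ e}.ncard ≤ 2

/-!
First split `G` into two subgraphs of maximum degree two, by induction on `G`. An acyclic `G ≠ ⊥`
has a leaf edge `uw`; after splitting `G - uw`, the edge goes to a side in which `w` has degree at
most one. Otherwise remove a whole cycle `C`: its vertices then have degree at most one in `G - C`.
Colour the edges of `C` alternately, so that the one place where two consecutive edges share a
colour is a vertex `v` of degree zero in that colour.

Then take such a splitting `(A, B)` that is maximal for the pair of reachability relations. If `A`
contained a cycle, all its vertices would have `B`-degree at most one. A component of `B` is a path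
or a cycle, so it contains at most two such vertices, and some edge of the cycle joins two
components of `B`. Moving that edge from `A` to `B` keeps the degrees at most two, leaves the
reachability of `A` unchanged (the edge is not a bridge) and strictly enlarges that of `B`.
-/

namespace SimpleGraph

variable {V : Type*} {G A B H : SimpleGraph V}

def IsLinearForest (H : SimpleGraph V) : Prop :=
  H.IsAcyclic ∧ ∀ v, (H.neighborSet v).ncard ≤ 2

lemma isLinearForestSet_edgeSet (H : SimpleGraph V) :
    IsLinearForestSet H.edgeSet ↔ H.IsLinearForest := by
  classical
  have hinc : ∀ v, {e ∈ H.edgeSet | v ∈ e}.ncard = (H.neighborSet v).ncard := fun v =>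
    Set.ncard_congr' (H.incidenceSetEquivNeighborSet v)
  simp only [IsLinearForestSet, IsLinearForest, fromEdgeSet_edgeSet, hinc]

lemma neighborSet_sup_edge_of_ne {u w x : V} (hu : x ≠ u) (hw : x ≠ w) :
    (H ⊔ edge u w).neighborSet x = H.neighborSet x := by
  ext y
  simp [edge_adj, hu, hw]

lemma reachable_deleteEdges_eq_of_not_isBridge {u v : V} (h : ¬G.IsBridge s(u, v)) :
    (G.deleteEdges {s(u, v)}).Reachable = G.Reachable := by
  rw [isBridge_iff, not_not] at h
  ext x y
  refine ⟨fun hxy => hxy.mono (deleteEdges_le _), fun hxy => ?_⟩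
  rw [reachable_iff_reflTransGen] at hxy ⊢
  refine hxy.lift' id fun a b hab => (reachable_iff_reflTransGen _ _).1 ?_
  by_cases he : s(a, b) = s(u, v)
  · rcases Sym2.eq_iff.1 he with ⟨rfl, rfl⟩ | ⟨rfl, rfl⟩
    exacts [h, h.symm]
  · exact Adj.reachable (deleteEdges_adj.2 ⟨hab, he⟩)

lemma Walk.spanningCoe_toSubgraph_cons {u v w : V} (h : G.Adj u v) (p : G.Walk v w) :
    (cons h p).toSubgraph.spanningCoe = p.toSubgraph.spanningCoe ⊔ edge u v := by
  ext x y
  simp only [Subgraph.spanningCoe_adj, sup_adj, adj_edge]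
  constructor
  · rintro (hxy | hxy)
    · exact Or.inr ⟨hxy, fun hxy' => h.ne (by simp_all)⟩
    · exact Or.inl hxy
  · rintro (hxy | hxy)
    · exact Or.inr hxy
    · exact Or.inl hxy.1

lemma Walk.IsPath.ncard_neighborSet_toSubgraph [DecidableEq V] {u v w : V} {p : G.Walk u v}
    (hp : p.IsPath) (hnil : ¬p.Nil) (hw : w ∈ p.support) :
    (p.toSubgraph.neighborSet w).ncard = if w = u ∨ w = v then 1 else 2 := by
  obtain ⟨n, rfl, hn⟩ := Walk.mem_support_iff_exists_getVert.1 hw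
  by_cases h0 : n = 0
  · subst h0
    simp [hp.neighborSet_toSubgraph_startpoint hnil]
  by_cases hl : n = p.length
  · subst hl
    simp [hp.neighborSet_toSubgraph_endpoint hnil]
  rw [if_neg (by rw [hp.getVert_eq_start_iff hn, hp.getVert_eq_end_iff hn]; tauto),
    hp.ncard_neighborSet_toSubgraph_internal_eq_two h0 (by omega)]

lemma ncard_neighborSet_sup_le (v : V) :
    ((A ⊔ B).neighborSet v).ncard ≤ (A.neighborSet v).ncard + (B.neighborSet v).ncard := by
  rw [neighborSet_sup]
  exact Set.ncard_union_le _ _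

section Finite

variable [Finite V]

lemma ncard_neighborSet_le_of_le (h : A ≤ B) (v : V) :
    (A.neighborSet v).ncard ≤ (B.neighborSet v).ncard :=
  Set.ncard_le_ncard (neighborSet_mono h v)

lemma ncard_neighborSet_sup (h : Disjoint A B) (v : V) :
    ((A ⊔ B).neighborSet v).ncard = (A.neighborSet v).ncard + (B.neighborSet v).ncard := by
  rw [neighborSet_sup]
  exact Set.ncard_union_eq (Set.disjoint_left.2 fun w (hA : A.Adj v w) (hB : B.Adj v w) =>
    Set.disjoint_left.1 (disjoint_edgeSet.2 h) (show s(v, w) ∈ A.edgeSet from hA) hB)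

lemma ncard_neighborSet_sup_edge_le (u w x : V) :
    ((H ⊔ edge u w).neighborSet x).ncard ≤ (H.neighborSet x).ncard + 1 := by
  refine (ncard_neighborSet_sup_le x).trans (Nat.add_le_add_left ?_ _)
  refine (Set.ncard_le_one).2 fun a ha b hb => ?_
  simp only [mem_neighborSet, edge_adj] at ha hb
  grind

lemma ncard_neighborSet_sup_edge_le_one {u w : V} (hH : ∀ x, (H.neighborSet x).ncard ≤ 1)
    (hw : (H.neighborSet w).ncard = 0) {x : V} (hx : x ≠ u) :
    ((H ⊔ edge u w).neighborSet x).ncard ≤ 1 := by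
  obtain rfl | hxw := eq_or_ne x w
  · have := ncard_neighborSet_sup_edge_le (H := H) u x x
    omega
  · rw [neighborSet_sup_edge_of_ne hx hxw]
    exact hH x

lemma ncard_neighborSet_sdiff_edge_add_one {u w : V} (h : G.Adj u w) :
    ((G \ edge u w).neighborSet u).ncard + 1 = (G.neighborSet u).ncard := by
  have : (G \ edge u w).neighborSet u = G.neighborSet u \ {w} := by
    ext y
    simp only [mem_neighborSet, sdiff_adj, edge_adj, Set.mem_sdiff, Set.mem_singleton_iff]
    grind [h.ne]
  rw [this, Set.ncard_sdiff_singleton_add_one (show w ∈ G.neighborSet u from h)]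

lemma Walk.ncard_neighborSet_eq_zero_of_notMem_support {u v x : V} {p : G.Walk u v}
    (hH : H ≤ p.toSubgraph.spanningCoe) (hx : x ∉ p.support) : (H.neighborSet x).ncard = 0 := by
  rw [Set.ncard_eq_zero]
  exact Set.eq_empty_of_forall_notMem fun _ hy =>
    hx (p.mem_verts_toSubgraph.1 (Subgraph.Adj.fst_mem (hH hy)))

lemma Walk.IsPath.exists_matching_partition {u v : V} {p : G.Walk u v} (hp : p.IsPath) :
    ∃ M₁ M₂ : SimpleGraph V, Disjoint M₁ M₂ ∧ M₁ ⊔ M₂ = p.toSubgraph.spanningCoe ∧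
      (∀ x, (M₁.neighborSet x).ncard ≤ 1) ∧ (∀ x, (M₂.neighborSet x).ncard ≤ 1) ∧
      (M₂.neighborSet u).ncard = 0 := by
  induction p with
  | nil => exact ⟨⊥, ⊥, by simp, by ext; simp, by simp, by simp, by simp⟩
  | @cons a b _ h p ih =>
    rw [cons_isPath_iff] at hp
    obtain ⟨M₁, M₂, hdisj, hsup, hM₁, hM₂, hM₂b⟩ := ih hp.1
    have hM₁a := ncard_neighborSet_eq_zero_of_notMem_support (hsup ▸ le_sup_left) hp.2
    refine ⟨M₂ ⊔ edge a b, M₁, ?_, ?_, fun x => ?_, hM₁, hM₁a⟩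
    · refine disjoint_sup_left.2 ⟨hdisj.symm, ((disjoint_edge _).2 fun hab => ?_).symm⟩
      exact ((Set.ncard_pos).2 ⟨b, hab⟩).ne' hM₁a
    · rw [spanningCoe_toSubgraph_cons, ← hsup, sup_comm M₁, sup_right_comm]
    · obtain rfl | hxa := eq_or_ne x a
      · have := ncard_neighborSet_sup_edge_le (H := M₂) x b x
        have := ncard_neighborSet_eq_zero_of_notMem_support (hsup ▸ le_sup_right) hp.2
        omega
      · exact ncard_neighborSet_sup_edge_le_one hM₂ hM₂b hxa

lemma Walk.IsCycle.exists_matching_partition {v : V} {c : G.Walk v v} (hc : c.IsCycle) :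
    ∃ X₁ X₂ : SimpleGraph V, Disjoint X₁ X₂ ∧ X₁ ⊔ X₂ = c.toSubgraph.spanningCoe ∧
      (∀ x ≠ v, (X₁.neighborSet x).ncard ≤ 1) ∧ ∀ x, (X₂.neighborSet x).ncard ≤ 1 := by
  obtain ⟨b, h, p, rfl⟩ := not_nil_iff.1 hc.not_nil
  rw [cons_isCycle_iff] at hc
  obtain ⟨M₁, M₂, hdisj, hsup, hM₁, hM₂, hM₂b⟩ := hc.1.exists_matching_partition
  refine ⟨M₂ ⊔ edge v b, M₁, ?_, ?_, fun x hx => ncard_neighborSet_sup_edge_le_one hM₂ hM₂b hx,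
    hM₁⟩
  · refine disjoint_sup_left.2 ⟨hdisj.symm, ((disjoint_edge _).2 fun hvb => hc.2 ?_).symm⟩
    exact adj_toSubgraph_iff_mem_edges.1 ((hsup ▸ le_sup_left : M₁ ≤ _) hvb)
  · rw [spanningCoe_toSubgraph_cons, ← hsup, sup_comm M₁, sup_right_comm]

lemma IsAcyclic.exists_neighborSet_eq_singleton (hG : G.IsAcyclic) (hne : G ≠ ⊥) :
    ∃ u w, G.neighborSet u = {w} := by
  obtain ⟨a, b, hab⟩ := ne_bot_iff_exists_adj.1 hne
  have : Nonempty V := ⟨a⟩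
  obtain ⟨u, v, p, hp, hmax⟩ := Walk.exists_isPath_forall_isPath_length_le_length G
  have hlen : 1 ≤ p.length := by simpa using hmax a b hab.toWalk (by simp [hab.ne])
  have hnil : ¬p.Nil := Walk.not_nil_iff_lt_length.2 hlen
  refine ⟨u, p.snd, Set.eq_singleton_iff_unique_mem.2 ⟨p.adj_snd hnil, fun w hw => ?_⟩⟩
  refine hG.eq_snd_of_adj_start hp hw (by_contra fun hws => ?_)
  simpa using hmax w v (p.cons hw.symm) (hp.cons hws)

lemma exists_partition_of_neighborSet_eq_singleton {u w : V}
    (hG : ∀ v, (G.neighborSet v).ncard ≤ 3) (hu : G.neighborSet u = {w})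
    (h : ∃ A B : SimpleGraph V, Disjoint A B ∧ A ⊔ B = G \ edge u w ∧
      (∀ v, (A.neighborSet v).ncard ≤ 2) ∧ ∀ v, (B.neighborSet v).ncard ≤ 2) :
    ∃ A B : SimpleGraph V, Disjoint A B ∧ A ⊔ B = G ∧
      (∀ v, (A.neighborSet v).ncard ≤ 2) ∧ ∀ v, (B.neighborSet v).ncard ≤ 2 := by
  obtain ⟨A, B, hAB, hsup, hA, hB⟩ := h
  have huw : G.Adj u w := (hu.symm ▸ Set.mem_singleton w : w ∈ G.neighborSet u)
  have hu' := ncard_neighborSet_sdiff_edge_add_one huw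
  have hw' := ncard_neighborSet_sdiff_edge_add_one huw.symm
  rw [hu, Set.ncard_singleton, ← hsup, ncard_neighborSet_sup hAB] at hu'
  rw [edge_comm, ← hsup, ncard_neighborSet_sup hAB] at hw'
  have := hG w
  rw [← sdiff_sup_cancel ((edge_le_iff _).2 (Or.inr huw)), ← hsup]
  clear hsup
  wlog hAw : (A.neighborSet w).ncard ≤ 1 generalizing A B
  · obtain ⟨B', A', h, hsup, hB', hA'⟩ := this B A hAB.symm hB hA (by omega) (by omega) (by omega)
    exact ⟨A', B', h.symm, by rw [sup_comm, hsup, sup_comm B], hA', hB'⟩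
  refine ⟨A ⊔ edge u w, B, disjoint_sup_left.2 ⟨hAB, ((disjoint_edge _).2 fun huw => ?_).symm⟩,
    sup_right_comm .., fun x => ?_, hB⟩
  · exact ((Set.ncard_pos (s := B.neighborSet u)).2 ⟨w, huw⟩).ne' (by omega)
  · have := ncard_neighborSet_sup_edge_le (H := A) u w x
    by_cases hx : x = u ∨ x = w
    · rcases hx with rfl | rfl <;> omega
    · push Not at hx
      rw [neighborSet_sup_edge_of_ne hx.1 hx.2]
      exact hA x

lemma exists_partition_sup_cycle {v : V} {c : G.Walk v v} (hc : c.IsCycle) (hAB : Disjoint A B)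
    (hABc : Disjoint (A ⊔ B) c.toSubgraph.spanningCoe)
    (hA : ∀ x, (A.neighborSet x).ncard ≤ 2) (hB : ∀ x, (B.neighborSet x).ncard ≤ 2)
    (hsupp : ∀ x ∈ c.support, (A.neighborSet x).ncard + (B.neighborSet x).ncard ≤ 1) :
    ∃ A' B' : SimpleGraph V, Disjoint A' B' ∧ A' ⊔ B' = A ⊔ B ⊔ c.toSubgraph.spanningCoe ∧
      (∀ x, (A'.neighborSet x).ncard ≤ 2) ∧ ∀ x, (B'.neighborSet x).ncard ≤ 2 := by
  wlog hAv : (A.neighborSet v).ncard = 0 generalizing A B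
  · have hv := hsupp v c.start_mem_support
    obtain ⟨B', A', h, hsup, hB', hA'⟩ := this hAB.symm (sup_comm A B ▸ hABc) hB hA
      (fun x hx => by have := hsupp x hx; omega) (by omega)
    exact ⟨A', B', h.symm, by rw [sup_comm, hsup, sup_comm B], hA', hB'⟩
  obtain ⟨hAC, hBC⟩ := disjoint_sup_left.1 hABc
  obtain ⟨X₁, X₂, hX, hXsup, hX₁, hX₂⟩ := hc.exists_matching_partition
  have hX₁C : X₁ ≤ c.toSubgraph.spanningCoe := hXsup ▸ le_sup_left
  have hX₂C : X₂ ≤ c.toSubgraph.spanningCoe := hXsup ▸ le_sup_right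
  refine ⟨A ⊔ X₁, B ⊔ X₂, ?_, by rw [← hXsup, sup_sup_sup_comm], fun x => ?_, fun x => ?_⟩
  · exact disjoint_sup_left.2 ⟨disjoint_sup_right.2 ⟨hAB, hAC.mono_right hX₂C⟩,
      disjoint_sup_right.2 ⟨(hBC.mono_right hX₁C).symm, hX⟩⟩
  · have := ncard_neighborSet_sup_le (A := A) (B := X₁) x
    by_cases hx : x ∈ c.support
    · have := hsupp x hx
      obtain rfl | hxv := eq_or_ne x v
      · have := (ncard_neighborSet_le_of_le hX₁C x).trans_eq
          (hc.ncard_neighborSet_toSubgraph_eq_two hx)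
        omega
      · have := hX₁ x hxv
        omega
    · have := Walk.ncard_neighborSet_eq_zero_of_notMem_support hX₁C hx
      have := hA x
      omega
  · have := ncard_neighborSet_sup_le (A := B) (B := X₂) x
    have := hX₂ x
    by_cases hx : x ∈ c.support
    · have := hsupp x hx
      omega
    · have := Walk.ncard_neighborSet_eq_zero_of_notMem_support hX₂C hx
      have := hB x
      omega

lemma exists_partition_of_isCycle {v : V} {c : G.Walk v v}
    (hG : ∀ v, (G.neighborSet v).ncard ≤ 3) (hc : c.IsCycle)
    (h : ∃ A B : SimpleGraph V, Disjoint A B ∧ A ⊔ B = G \ c.toSubgraph.spanningCoe ∧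
      (∀ v, (A.neighborSet v).ncard ≤ 2) ∧ ∀ v, (B.neighborSet v).ncard ≤ 2) :
    ∃ A B : SimpleGraph V, Disjoint A B ∧ A ⊔ B = G ∧
      (∀ v, (A.neighborSet v).ncard ≤ 2) ∧ ∀ v, (B.neighborSet v).ncard ≤ 2 := by
  obtain ⟨A, B, hAB, hsup, hA, hB⟩ := h
  have hABc : Disjoint (A ⊔ B) c.toSubgraph.spanningCoe := hsup ▸ disjoint_sdiff_self_left
  have hGsup : A ⊔ B ⊔ c.toSubgraph.spanningCoe = G := by
    rw [hsup, sdiff_sup_cancel c.toSubgraph.spanningCoe_le]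
  rw [← hGsup]
  refine exists_partition_sup_cycle hc hAB hABc hA hB fun x hx => ?_
  have := ncard_neighborSet_sup hABc x
  rw [ncard_neighborSet_sup hAB, hGsup] at this
  have := hG x
  have : (c.toSubgraph.spanningCoe.neighborSet x).ncard = 2 :=
    hc.ncard_neighborSet_toSubgraph_eq_two hx
  omega

theorem exists_partition_ncard_neighborSet_le_two (G : SimpleGraph V)
    (hG : ∀ v, (G.neighborSet v).ncard ≤ 3) :
    ∃ A B : SimpleGraph V, Disjoint A B ∧ A ⊔ B = G ∧
      (∀ v, (A.neighborSet v).ncard ≤ 2) ∧ ∀ v, (B.neighborSet v).ncard ≤ 2 := by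
  induction G using WellFoundedLT.induction with
  | _ G ih =>
  have ih' : ∀ H ≤ G, H ≠ ⊥ → ∃ A B : SimpleGraph V, Disjoint A B ∧ A ⊔ B = G \ H ∧
      (∀ v, (A.neighborSet v).ncard ≤ 2) ∧ ∀ v, (B.neighborSet v).ncard ≤ 2 :=
    fun H hle hne => ih _ (sdiff_lt hle hne) fun v =>
      (ncard_neighborSet_le_of_le sdiff_le v).trans (hG v)
  by_cases hacyc : G.IsAcyclic
  · obtain rfl | hne := eq_or_ne G ⊥
    · exact ⟨⊥, ⊥, disjoint_bot_left, bot_sup_eq _, by simp, by simp⟩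
    obtain ⟨u, w, hu⟩ := hacyc.exists_neighborSet_eq_singleton hne
    have huw : G.Adj u w := (hu.symm ▸ Set.mem_singleton w : w ∈ G.neighborSet u)
    exact exists_partition_of_neighborSet_eq_singleton hG hu <| ih' _
      ((edge_le_iff _).2 (Or.inr huw)) (ne_bot_iff_exists_adj.2 ⟨u, w, by simp [edge_adj, huw.ne]⟩)
  · obtain ⟨v, c, hc⟩ : ∃ v, ∃ c : G.Walk v v, c.IsCycle := by simpa [IsAcyclic] using hacyc
    exact exists_partition_of_isCycle hG hc <| ih' _ c.toSubgraph.spanningCoe_le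
      (ne_bot_iff_exists_adj.2 ⟨_, _, c.toSubgraph_adj_snd hc.not_nil⟩)

lemma eq_or_eq_of_reachable_of_ncard_neighborSet_le_one
    (hB : ∀ x, (B.neighborSet x).ncard ≤ 2) {x y z : V} (hxy : x ≠ y)
    (hx : (B.neighborSet x).ncard ≤ 1) (hy : (B.neighborSet y).ncard ≤ 1)
    (hz : (B.neighborSet z).ncard ≤ 1) (hrxy : B.Reachable x y) (hrxz : B.Reachable x z) :
    z = x ∨ z = y := by
  classical
  obtain ⟨p, hp⟩ := hrxy.exists_isPath
  have hnil : ¬p.Nil := fun h => hxy h.eq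
  have hdeg := fun w (hw : w ∈ p.support) => hp.ncard_neighborSet_toSubgraph hnil hw
  -- the degree bounds leave `B` no edge at a vertex of `p` besides the edges of `p`
  have hnbr : ∀ w ∈ p.support, p.toSubgraph.neighborSet w = B.neighborSet w := fun w hw => by
    refine Set.eq_of_subset_of_ncard_le (p.toSubgraph.neighborSet_subset w) ?_
    rw [hdeg w hw]
    split_ifs with h
    · rcases h with rfl | rfl <;> assumption
    · exact hB w
  have hclosed : ∀ t, B.Reachable x t → t ∈ p.support := fun t ht => by
    rw [reachable_iff_reflTransGen] at ht
    induction ht with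
    | refl => exact p.start_mem_support
    | tail _ hbc ih =>
      rw [← mem_neighborSet, ← hnbr _ ih] at hbc
      exact p.mem_verts_toSubgraph.1 (Subgraph.Adj.snd_mem hbc)
  have hzp := hclosed z hrxz
  by_contra h
  have := hdeg z hzp
  rw [if_neg h, hnbr z hzp] at this
  omega

lemma exists_partition_reachable_lt (hAB : Disjoint A B)
    (hdeg : ∀ x, ((A ⊔ B).neighborSet x).ncard ≤ 3)
    (hA : ∀ x, (A.neighborSet x).ncard ≤ 2) (hB : ∀ x, (B.neighborSet x).ncard ≤ 2)
    (hcyc : ¬A.IsAcyclic) :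
    ∃ A' B' : SimpleGraph V, Disjoint A' B' ∧ A' ⊔ B' = A ⊔ B ∧
      (∀ x, (A'.neighborSet x).ncard ≤ 2) ∧ (∀ x, (B'.neighborSet x).ncard ≤ 2) ∧
      A.Reachable ≤ A'.Reachable ∧ B.Reachable < B'.Reachable := by
  obtain ⟨v, c, hc⟩ : ∃ v, ∃ c : A.Walk v v, c.IsCycle := by simpa [IsAcyclic] using hcyc
  have hB1 : ∀ x ∈ c.support, (B.neighborSet x).ncard ≤ 1 := fun x hx => by
    have h2 : 2 ≤ (A.neighborSet x).ncard := hc.ncard_neighborSet_toSubgraph_eq_two hx ▸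
      Set.ncard_le_ncard (c.toSubgraph.neighborSet_subset x)
    have := ncard_neighborSet_sup hAB x
    have := hdeg x
    omega
  have hsnd := c.toSubgraph_adj_snd hc.not_nil
  have hpen := c.toSubgraph_adj_penultimate hc.not_nil
  obtain ⟨u, w, huw, hnr⟩ : ∃ u w, s(u, w) ∈ c.edges ∧ ¬B.Reachable u w := by
    -- otherwise `v`, `c.snd` and `c.penultimate` lie in one component of `B`
    by_contra! h
    rcases eq_or_eq_of_reachable_of_ncard_neighborSet_le_one hB (c.adj_snd hc.not_nil).ne
      (hB1 _ c.start_mem_support) (hB1 _ (c.mem_verts_toSubgraph.1 hsnd.snd_mem))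
      (hB1 _ (c.mem_verts_toSubgraph.1 hpen.fst_mem))
      (h _ _ (Walk.adj_toSubgraph_iff_mem_edges.1 hsnd))
      (h _ _ (Walk.adj_toSubgraph_iff_mem_edges.1 hpen.symm)) with h | h
    · exact (c.adj_penultimate hc.not_nil).ne h
    · exact hc.snd_ne_penultimate h.symm
  have hadj : A.Adj u w := c.adj_of_mem_edges huw
  have hle : edge u w ≤ A := (edge_le_iff _).2 (Or.inr hadj)
  refine ⟨A.deleteEdges {s(u, w)}, B ⊔ edge u w, ?_, ?_, fun x => ?_, fun x => ?_,
    (reachable_deleteEdges_eq_of_not_isBridge fun hb => hb.notMem_edges_of_isCycle hc huw).ge,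
    lt_of_le_not_ge (fun x y h => h.mono le_sup_left) fun hle => hnr (hle u w ?_)⟩
  · exact disjoint_sup_right.2 ⟨hAB.mono_left (deleteEdges_le _), disjoint_sdiff_self_left⟩
  · rw [← sup_assoc, sup_right_comm]
    exact congrArg (· ⊔ B) (sdiff_sup_cancel hle)
  · exact (ncard_neighborSet_le_of_le (deleteEdges_le _) x).trans (hA x)
  · have := ncard_neighborSet_sup_edge_le (H := B) u w x
    by_cases hx : x = u ∨ x = w
    · have := hB1 u (c.fst_mem_support_of_mem_edges huw)
      have := hB1 w (c.snd_mem_support_of_mem_edges huw)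
      rcases hx with rfl | rfl <;> omega
    · push Not at hx
      rw [neighborSet_sup_edge_of_ne hx.1 hx.2]
      exact hB x
  · exact Adj.reachable (Or.inr ((edge_adj _ _ _ _).2 ⟨Or.inl ⟨rfl, rfl⟩, hadj.ne⟩))

theorem exists_partition_isLinearForest (G : SimpleGraph V)
    (hG : ∀ v, (G.neighborSet v).ncard ≤ 3) :
    ∃ A B : SimpleGraph V, Disjoint A B ∧ A ⊔ B = G ∧ A.IsLinearForest ∧ B.IsLinearForest := by
  let S := {p : SimpleGraph V × SimpleGraph V | Disjoint p.1 p.2 ∧ p.1 ⊔ p.2 = G ∧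
    (∀ v, (p.1.neighborSet v).ncard ≤ 2) ∧ ∀ v, (p.2.neighborSet v).ncard ≤ 2}
  obtain ⟨A, B, hS⟩ := exists_partition_ncard_neighborSet_le_two G hG
  obtain ⟨⟨A, B⟩, ⟨hAB, hsup, hA, hB⟩, hmax⟩ :=
    S.toFinite.exists_maximalFor (fun p => (p.1.Reachable, p.2.Reachable)) S ⟨(A, B), hS⟩
  dsimp only at hAB hsup hA hB hmax
  subst hsup
  refine ⟨A, B, hAB, rfl, ⟨by_contra fun hcyc => ?_, hA⟩, ⟨by_contra fun hcyc => ?_, hB⟩⟩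
  · obtain ⟨A', B', hA'B', hsup, hA', hB', hAr, hBr⟩ :=
      exists_partition_reachable_lt hAB hG hA hB hcyc
    have hS' : (A', B') ∈ S := ⟨hA'B', hsup, hA', hB'⟩
    exact hBr.not_ge (hmax hS' ⟨hAr, hBr.le⟩).2
  · rw [sup_comm] at hG
    obtain ⟨B', A', hB'A', hsup, hB', hA', hBr, hAr⟩ :=
      exists_partition_reachable_lt hAB.symm hG hB hA hcyc
    have hS' : (A', B') ∈ S := ⟨hB'A'.symm, by rw [sup_comm, hsup, sup_comm], hA', hB'⟩
    exact hAr.not_ge (hmax hS' ⟨hAr.le, hBr⟩).1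

end Finite

end SimpleGraph

theorem edgeSet_partition_two_linear_forests_general {V : Type*} [Fintype V]
    (G : SimpleGraph V) [DecidableRel G.Adj] (hdeg : ∀ v : V, G.degree v ≤ 3) :
    ∃ L₁ L₂ : Set (Sym2 V), Disjoint L₁ L₂ ∧ L₁ ∪ L₂ = G.edgeSet ∧
      IsLinearForestSet L₁ ∧ IsLinearForestSet L₂ := by
  obtain ⟨A, B, hAB, hsup, hA, hB⟩ := exists_partition_isLinearForest G fun v => by
    rw [← Nat.card_coe_set_eq, Nat.card_eq_fintype_card, card_neighborSet_eq_degree]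
    exact hdeg v
  exact ⟨A.edgeSet, B.edgeSet, disjoint_edgeSet.2 hAB, by rw [← edgeSet_sup, hsup],
    (isLinearForestSet_edgeSet A).2 hA, (isLinearForestSet_edgeSet B).2 hB⟩

/-- Every finite simple graph of maximum degree at most `3` admits a partition of its
edge set into two linear forests. -/
theorem edgeSet_partition_two_linear_forests {V : Type*} [Fintype V] [DecidableEq V]
    (G : SimpleGraph V) [DecidableRel G.Adj] (hdeg : ∀ v : V, G.degree v ≤ 3) :
    ∃ L₁ L₂ : Set (Sym2 V), Disjoint L₁ L₂ ∧ L₁ ∪ L₂ = G.edgeSet ∧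
      IsLinearForestSet L₁ ∧ IsLinearForestSet L₂ :=
  edgeSet_partition_two_linear_forests_general G hdeg
end

section
/- Let (F,M) be a valid partition with k colors of a finite simple graph G = (V,E), and let M = M₁ ∪ … ∪ M_k. Suppose the surplus graph H = (V,M) contains a path whose edge sequence is e₁, …, e_l with l ≥ 2 such that e₁ and e_l both belong to the same set M_i. Then there exists a valid partition (F',M') of G with k colors such that |M'₁ ∪ … ∪ M'_k| < |M|. -/
open SimpleGraph

/-- A valid partition of `G` with `k` colors: pairwise disjoint edge sets
`F 1, …, F k, M 1, …, M k` covering the edges of `G`, where each `F i` is a forest,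
each `M i` is a matching, every edge of `M i` has both endpoints in the same connected
component of `(V, F i)`, and no two distinct edges of `M i` have their endpoints in the
same connected component of `(V, F i)`. -/
def IsValidPartition {V : Type*} (G : SimpleGraph V) (k : ℕ)
    (F M : Fin k → Set (Sym2 V)) : Prop :=
  (∀ i, IsForestSet (F i)) ∧
  (∀ i, IsMatchingSet (M i)) ∧
  (Pairwise fun i j => Disjoint (F i) (F j)) ∧
  (Pairwise fun i j => Disjoint (M i) (M j)) ∧
  (∀ i j, Disjoint (F i) (M j)) ∧
  ((⋃ i, F i) ∪ (⋃ i, M i)) = G.edgeSet ∧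
  (∀ (i : Fin k) (u v : V), s(u, v) ∈ M i →
    (SimpleGraph.fromEdgeSet (F i)).Reachable u v) ∧
  (∀ i : Fin k, ∀ e ∈ M i, ∀ f ∈ M i, e ≠ f → ∀ u v : V, u ∈ e → v ∈ f →
    ¬ (SimpleGraph.fromEdgeSet (F i)).Reachable u v)

lemma reachable_sup_edge {V : Type*} {G : SimpleGraph V} {u v x y : V}
    (h : (G ⊔ SimpleGraph.edge u v).Reachable x y) :
    G.Reachable x y ∨ (G.Reachable x u ∧ G.Reachable v y) ∨
      (G.Reachable x v ∧ G.Reachable u y) := by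
  obtain ⟨w⟩ := h
  induction w with
  | nil => exact Or.inl Reachable.rfl
  | @cons x z y hadj w ih =>
    rcases hadj with hG | he
    · rcases ih with h1 | ⟨h2a, h2b⟩ | ⟨h3a, h3b⟩
      · exact Or.inl (hG.reachable.trans h1)
      · exact Or.inr (Or.inl ⟨hG.reachable.trans h2a, h2b⟩)
      · exact Or.inr (Or.inr ⟨hG.reachable.trans h3a, h3b⟩)
    · rw [edge_adj] at he
      obtain ⟨⟨hx, hz⟩ | ⟨hx, hz⟩, hne⟩ := he
      · subst hx; subst hz
        rcases ih with h1 | ⟨h2a, h2b⟩ | ⟨h3a, h3b⟩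
        · exact Or.inr (Or.inl ⟨Reachable.rfl, h1⟩)
        · exact Or.inr (Or.inl ⟨Reachable.rfl, h2b⟩)
        · exact Or.inl h3b
      · subst hx; subst hz
        rcases ih with h1 | ⟨h2a, h2b⟩ | ⟨h3a, h3b⟩
        · exact Or.inr (Or.inr ⟨Reachable.rfl, h1⟩)
        · exact Or.inl h2b
        · exact Or.inr (Or.inr ⟨Reachable.rfl, h3b⟩)

lemma isAcyclic_sup_edge {V : Type*} {G : SimpleGraph V} {u v : V} (hG : G.IsAcyclic)
    (h : ¬ G.Reachable u v) : (G ⊔ SimpleGraph.edge u v).IsAcyclic := by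
  have hne : u ≠ v := by rintro rfl; exact h Reachable.rfl
  intro x c hc
  by_cases hmem : s(u, v) ∈ c.edges
  · have h2 := (adj_and_reachable_delete_edges_iff_exists_cycle.mpr ⟨x, c, hc, hmem⟩).2
    apply h
    refine h2.mono ?_
    intro a b hab
    rcases hab.1 with h1 | h1
    · exact h1
    · exact absurd h1 hab.2
  · have hsub : ∀ e ∈ c.edges, e ∈ G.edgeSet := by
      intro e he
      have h3 : e ∈ (G ⊔ SimpleGraph.edge u v).edgeSet := c.edges_subset_edgeSet he
      rw [edgeSet_sup, edge_edgeSet_of_ne hne] at h3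
      rcases h3 with h3 | h3
      · exact h3
      · rw [Set.mem_singleton_iff] at h3; exact absurd (h3 ▸ he) hmem
    exact hG (c.transfer G hsub) (hc.transfer hsub)

lemma fromEdgeSet_insert_eq {V : Type*} (u v : V) (S : Set (Sym2 V)) :
    fromEdgeSet (insert s(u, v) S) = fromEdgeSet S ⊔ SimpleGraph.edge u v := by
  rw [Set.insert_eq, fromEdgeSet_union, sup_comm]
  rfl

lemma mem_iUnion_update {α : Type*} {k : ℕ} {f : Fin k → Set α} {a : Fin k} {s : Set α}
    {e : α} : (e ∈ ⋃ t, Function.update f a s t) ↔ e ∈ s ∨ ∃ t, t ≠ a ∧ e ∈ f t := by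
  simp only [Set.mem_iUnion]
  constructor
  · rintro ⟨t, ht⟩
    rcases eq_or_ne t a with rfl | hta
    · rw [Function.update_self] at ht; exact Or.inl ht
    · rw [Function.update_of_ne hta] at ht; exact Or.inr ⟨t, hta, ht⟩
  · rintro (hs | ⟨t, hta, ht⟩)
    · exact ⟨a, by rwa [Function.update_self]⟩
    · exact ⟨t, by rwa [Function.update_of_ne hta]⟩

/-- Separation property for a single color. -/
def SepOn {V : Type*} (Fb Mb : Set (Sym2 V)) : Prop :=
  ∀ e ∈ Mb, ∀ f ∈ Mb, e ≠ f → ∀ x y : V, x ∈ e → y ∈ f →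
    ¬ (SimpleGraph.fromEdgeSet Fb).Reachable x y

lemma matching_of_sep {V : Type*} {Fb Mb : Set (Sym2 V)} (h : SepOn Fb Mb) :
    IsMatchingSet Mb :=
  fun e he f hf hef x hxe hxf => h e he f hf hef x x hxe hxf Reachable.rfl

lemma sep_insert {V : Type*} {Fb Mb : Set (Sym2 V)} {e0 enew : Sym2 V}
    (hs : SepOn Fb Mb) (he0 : e0 ∈ Mb)
    (hnew : ∀ x ∈ enew, ∃ z ∈ e0, (fromEdgeSet Fb).Reachable z x) :
    SepOn Fb (insert enew (Mb \ {e0})) := by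
  intro e he f hf hef x y hxe hyf hR
  rcases he with rfl | ⟨heM, he0'⟩ <;> rcases hf with rfl | ⟨hfM, hf0'⟩
  · exact hef rfl
  · obtain ⟨z, hz, hzr⟩ := hnew x hxe
    exact hs e0 he0 f hfM (Ne.symm hf0') z y hz hyf (hzr.trans hR)
  · obtain ⟨z, hz, hzr⟩ := hnew y hyf
    exact hs e heM e0 he0 he0' x z hxe hz (hR.trans hzr.symm)
  · exact hs e heM f hfM hef x y hxe hyf hR

lemma mem_iUnion_update2 {α : Type*} {k : ℕ} {f : Fin k → Set α} {a b : Fin k}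
    (hab : a ≠ b) {s t : Set α} {e : α} :
    (e ∈ ⋃ r, Function.update (Function.update f a s) b t r) ↔
      e ∈ t ∨ e ∈ s ∨ ∃ r, r ≠ a ∧ r ≠ b ∧ e ∈ f r := by
  rw [mem_iUnion_update]
  constructor
  · rintro (h | ⟨r, hrb, hr⟩)
    · exact Or.inl h
    · rcases eq_or_ne r a with rfl | hra
      · rw [Function.update_self] at hr; exact Or.inr (Or.inl hr)
      · rw [Function.update_of_ne hra] at hr; exact Or.inr (Or.inr ⟨r, hra, hrb, hr⟩)
  · rintro (h | h | ⟨r, hra, hrb, hr⟩)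
    · exact Or.inl h
    · exact Or.inr ⟨a, hab, by rwa [Function.update_self]⟩
    · exact Or.inr ⟨r, hrb, by rwa [Function.update_of_ne hra]⟩

lemma move_delta {V : Type*} (G : SimpleGraph V) (k : ℕ)
    (F M : Fin k → Set (Sym2 V)) (hFM : IsValidPartition G k F M)
    (i j : Fin k) (hij : j ≠ i) (u v w : V)
    (h1 : s(u, v) ∈ M i) (h2 : s(v, w) ∈ M j) (hne : s(u, v) ≠ s(v, w))
    (hr1 : (fromEdgeSet (F j)).Reachable u v)
    (hr2 : (fromEdgeSet (F i)).Reachable v w) :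
    ∃ M' : Fin k → Set (Sym2 V), IsValidPartition G k F M' ∧
      (⋃ t, M' t) = (⋃ t, M t) ∧ s(v, w) ∈ M' i ∧
      ∀ e, e ∈ M i → e ≠ s(u, v) → e ∈ M' i := by
  obtain ⟨hforest, hmatch, hFdisj, hMdisj, hFMd, hcover, hreach, hsep⟩ := hFM
  set e1 : Sym2 V := s(u, v) with he1
  set e2 : Sym2 V := s(v, w) with he2
  set M' : Fin k → Set (Sym2 V) :=
    Function.update (Function.update M i (insert e2 (M i \ {e1}))) j
      (insert e1 (M j \ {e2})) with hM'
  have hM'i : M' i = insert e2 (M i \ {e1}) := by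
    rw [hM', Function.update_of_ne (Ne.symm hij), Function.update_self]
  have hM'j : M' j = insert e1 (M j \ {e2}) := by rw [hM', Function.update_self]
  have hM't : ∀ t, t ≠ i → t ≠ j → M' t = M t := by
    intro t hti htj
    rw [hM', Function.update_of_ne htj, Function.update_of_ne hti]
  have hveq1 : v ∈ e1 := by rw [he1]; simp
  have hveq2 : v ∈ e2 := by rw [he2]; simp
  -- membership decomposition
  have memM' : ∀ t x, x ∈ M' t →
      (x ∈ M t ∧ ¬(t = i ∧ x = e1) ∧ ¬(t = j ∧ x = e2)) ∨ (t = i ∧ x = e2) ∨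
        (t = j ∧ x = e1) := by
    intro t x hx
    rcases eq_or_ne t i with hti | hti
    · subst hti
      rw [hM'i] at hx
      rcases Set.mem_insert_iff.mp hx with rfl | ⟨hxM, hx1⟩
      · exact Or.inr (Or.inl ⟨rfl, rfl⟩)
      · refine Or.inl ⟨hxM, ?_, ?_⟩
        · rintro ⟨-, rfl⟩; exact hx1 rfl
        · rintro ⟨rfl, -⟩; exact hij rfl
    rcases eq_or_ne t j with htj | htj
    · subst htj
      rw [hM'j] at hx
      rcases Set.mem_insert_iff.mp hx with rfl | ⟨hxM, hx2⟩
      · exact Or.inr (Or.inr ⟨rfl, rfl⟩)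
      · refine Or.inl ⟨hxM, ?_, ?_⟩
        · rintro ⟨rfl, -⟩; exact hti rfl
        · rintro ⟨-, rfl⟩; exact hx2 rfl
    · rw [hM't t hti htj] at hx
      exact Or.inl ⟨hx, fun h => hti h.1, fun h => htj h.1⟩
  have hMdj : ∀ t, t ≠ i → e1 ∉ M t := by
    intro t hti hmem
    exact Set.disjoint_left.mp (hMdisj hti) hmem h1
  have hMdj2 : ∀ t, t ≠ j → e2 ∉ M t := by
    intro t htj hmem
    exact Set.disjoint_left.mp (hMdisj htj) hmem h2
  -- separation for the two new matchings
  have hsep_i : SepOn (F i) (M' i) := by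
    rw [hM'i]
    refine sep_insert (hsep i) h1 ?_
    intro x hx
    refine ⟨v, hveq1, ?_⟩
    rw [he2, Sym2.mem_iff] at hx
    rcases hx with rfl | rfl
    · exact Reachable.rfl
    · exact hr2
  have hsep_j : SepOn (F j) (M' j) := by
    rw [hM'j]
    refine sep_insert (hsep j) h2 ?_
    intro x hx
    refine ⟨v, hveq2, ?_⟩
    rw [he1, Sym2.mem_iff] at hx
    rcases hx with rfl | rfl
    · exact hr1.symm
    · exact Reachable.rfl
  have hsep' : ∀ t, SepOn (F t) (M' t) := by
    intro t
    rcases eq_or_ne t i with hti | hti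
    · subst hti; exact hsep_i
    rcases eq_or_ne t j with htj | htj
    · subst htj; exact hsep_j
    · rw [hM't t hti htj]; exact hsep t
  have hunion : (⋃ t, M' t) = ⋃ t, M t := by
    ext x
    rw [hM', mem_iUnion_update2 (Ne.symm hij)]
    constructor
    · rintro (h | h | ⟨r, hra, hrb, hr⟩)
      · rcases Set.mem_insert_iff.mp h with rfl | ⟨hm, -⟩
        · exact Set.mem_iUnion.mpr ⟨i, h1⟩
        · exact Set.mem_iUnion.mpr ⟨j, hm⟩
      · rcases Set.mem_insert_iff.mp h with rfl | ⟨hm, -⟩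
        · exact Set.mem_iUnion.mpr ⟨j, h2⟩
        · exact Set.mem_iUnion.mpr ⟨i, hm⟩
      · exact Set.mem_iUnion.mpr ⟨r, hr⟩
    · intro hx
      obtain ⟨t, ht⟩ := Set.mem_iUnion.mp hx
      rcases eq_or_ne t i with hti | hti
      · subst hti
        rcases eq_or_ne x e1 with rfl | hx1
        · exact Or.inl (Set.mem_insert _ _)
        · exact Or.inr (Or.inl (Set.mem_insert_iff.mpr (Or.inr ⟨ht, hx1⟩)))
      rcases eq_or_ne t j with htj | htj
      · subst htj
        rcases eq_or_ne x e2 with rfl | hx2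
        · exact Or.inr (Or.inl (Set.mem_insert _ _))
        · exact Or.inl (Set.mem_insert_iff.mpr (Or.inr ⟨ht, hx2⟩))
      · exact Or.inr (Or.inr ⟨t, hti, htj, ht⟩)
  refine ⟨M', ⟨hforest, fun t => matching_of_sep (hsep' t), hFdisj, ?_, ?_, ?_, ?_, hsep'⟩,
    hunion, ?_, ?_⟩
  · -- pairwise disjoint M'
    intro a b hab
    rw [Set.disjoint_left]
    intro x hxa hxb
    rcases memM' a x hxa with ⟨hxMa, hna1, hna2⟩ | ⟨rfl, ha2⟩ | ⟨rfl, ha2⟩ <;>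
      rcases memM' b x hxb with ⟨hxMb, hnb1, hnb2⟩ | ⟨rfl, hb2⟩ | ⟨rfl, hb2⟩
    · exact Set.disjoint_left.mp (hMdisj hab) hxMa hxMb
    · exact hna2 ⟨(by_contra fun h => hMdj2 a h (hb2 ▸ hxMa)), hb2⟩
    · exact hna1 ⟨(by_contra fun h => hMdj a h (hb2 ▸ hxMa)), hb2⟩
    · exact hnb2 ⟨(by_contra fun h => hMdj2 b h (ha2 ▸ hxMb)), ha2⟩
    · exact hab rfl
    · exact hne (hb2.symm.trans ha2)
    · exact hnb1 ⟨(by_contra fun h => hMdj b h (ha2 ▸ hxMb)), ha2⟩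
    · exact hne (ha2.symm.trans hb2)
    · exact hab rfl
  · -- F disjoint M'
    intro a b
    rw [Set.disjoint_right]
    intro x hx hxF
    rcases memM' b x hx with ⟨hxM, -, -⟩ | ⟨-, hx2⟩ | ⟨-, hx2⟩
    · exact Set.disjoint_left.mp (hFMd a b) hxF hxM
    · exact Set.disjoint_left.mp (hFMd a j) (hx2 ▸ hxF) h2
    · exact Set.disjoint_left.mp (hFMd a i) (hx2 ▸ hxF) h1
  · -- cover
    rw [hunion]; exact hcover
  · -- reach
    intro t x y hxy
    rcases eq_or_ne t i with hti | hti
    · subst hti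
      rw [hM'i] at hxy
      rcases Set.mem_insert_iff.mp hxy with hxy | ⟨hxM, -⟩
      · rw [he2, Sym2.eq_iff] at hxy
        rcases hxy with ⟨rfl, rfl⟩ | ⟨rfl, rfl⟩
        · exact hr2
        · exact hr2.symm
      · exact hreach _ x y hxM
    rcases eq_or_ne t j with htj | htj
    · subst htj
      rw [hM'j] at hxy
      rcases Set.mem_insert_iff.mp hxy with hxy | ⟨hxM, -⟩
      · rw [he1, Sym2.eq_iff] at hxy
        rcases hxy with ⟨rfl, rfl⟩ | ⟨rfl, rfl⟩
        · exact hr1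
        · exact hr1.symm
      · exact hreach _ x y hxM
    · rw [hM't t hti htj] at hxy
      exact hreach t x y hxy
  · rw [hM'i]; exact Set.mem_insert _ _
  · intro e heM he1'
    rw [hM'i]
    exact Set.mem_insert_iff.mpr (Or.inr ⟨heM, he1'⟩)


lemma move_alpha {V : Type*} [Fintype V] [DecidableEq V] (G : SimpleGraph V) (k : ℕ)
    (F M : Fin k → Set (Sym2 V)) (hFM : IsValidPartition G k F M)
    (i j : Fin k) (hij : j ≠ i) (u v w : V)
    (h1 : s(u, v) ∈ M i) (h2 : s(v, w) ∈ M j) (hne : s(u, v) ≠ s(v, w))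
    (hnr : ¬ (fromEdgeSet (F j)).Reachable u v)
    (hr : (fromEdgeSet (F i)).Reachable v w) :
    ∃ F' M' : Fin k → Set (Sym2 V), IsValidPartition G k F' M' ∧
      (⋃ t, M' t).ncard < (⋃ t, M t).ncard := by
  obtain ⟨hforest, hmatch, hFdisj, hMdisj, hFMd, hcover, hreach, hsep⟩ := hFM
  set e1 : Sym2 V := s(u, v) with he1
  set e2 : Sym2 V := s(v, w) with he2
  set F' := Function.update F j (insert e1 (F j)) with hF'
  set M' := Function.update (Function.update M i (insert e2 (M i \ {e1}))) j
    (M j \ {e2}) with hM'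
  have hF'j : F' j = insert e1 (F j) := Function.update_self _ _ _
  have hF't : ∀ t, t ≠ j → F' t = F t := fun t ht => Function.update_of_ne ht _ _
  have hM'i : M' i = insert e2 (M i \ {e1}) := by
    rw [hM', Function.update_of_ne (Ne.symm hij), Function.update_self]
  have hM'j : M' j = M j \ {e2} := by rw [hM', Function.update_self]
  have hM't : ∀ t, t ≠ i → t ≠ j → M' t = M t := fun t hti htj => by
    rw [hM', Function.update_of_ne htj, Function.update_of_ne hti]
  have hveq1 : v ∈ e1 := by rw [he1]; simp
  have hveq2 : v ∈ e2 := by rw [he2]; simp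
  have hMdj : ∀ t, t ≠ i → e1 ∉ M t := fun t hti hmem =>
    Set.disjoint_left.mp (hMdisj hti) hmem h1
  have hMdj2 : ∀ t, t ≠ j → e2 ∉ M t := fun t htj hmem =>
    Set.disjoint_left.mp (hMdisj htj) hmem h2
  have hFnot1 : ∀ t, e1 ∉ F t := fun t hmem => Set.disjoint_left.mp (hFMd t i) hmem h1
  have hFnot2 : ∀ t, e2 ∉ F t := fun t hmem => Set.disjoint_left.mp (hFMd t j) hmem h2
  have memM' : ∀ t x, x ∈ M' t →
      (x ∈ M t ∧ ¬(t = i ∧ x = e1) ∧ ¬(t = j ∧ x = e2)) ∨ (t = i ∧ x = e2) := by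
    intro t x hx
    rcases eq_or_ne t i with hti | hti
    · subst hti
      rw [hM'i] at hx
      rcases Set.mem_insert_iff.mp hx with rfl | ⟨hxM, hx1⟩
      · exact Or.inr ⟨rfl, rfl⟩
      · exact Or.inl ⟨hxM, fun h => hx1 h.2, fun h => hij h.1.symm⟩
    rcases eq_or_ne t j with htj | htj
    · subst htj
      rw [hM'j] at hx
      exact Or.inl ⟨hx.1, fun h => hti h.1, fun h => hx.2 h.2⟩
    · rw [hM't t hti htj] at hx
      exact Or.inl ⟨hx, fun h => hti h.1, fun h => htj h.1⟩
  have memF' : ∀ t x, x ∈ F' t → x ∈ F t ∨ (t = j ∧ x = e1) := by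
    intro t x hx
    rcases eq_or_ne t j with htj | htj
    · subst htj
      rw [hF'j] at hx
      rcases Set.mem_insert_iff.mp hx with rfl | h
      · exact Or.inr ⟨rfl, rfl⟩
      · exact Or.inl h
    · rw [hF't t htj] at hx; exact Or.inl hx
  have hFor : ∀ t, IsForestSet (F' t) := by
    intro t
    rcases eq_or_ne t j with htj | htj
    · rw [htj, hF'j]
      have : (fromEdgeSet (insert e1 (F j))).IsAcyclic := by
        rw [he1, fromEdgeSet_insert_eq]
        exact isAcyclic_sup_edge (hforest j) hnr
      exact this
    · rw [hF't t htj]; exact hforest t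
  have hmono_j : fromEdgeSet (F j) ≤ fromEdgeSet (F' j) := by
    rw [hF'j]; exact fromEdgeSet_mono (Set.subset_insert _ _)
  have hsep_i : SepOn (F i) (M' i) := by
    rw [hM'i]
    refine sep_insert (hsep i) h1 ?_
    intro x hx
    refine ⟨v, hveq1, ?_⟩
    rw [he2, Sym2.mem_iff] at hx
    rcases hx with rfl | rfl
    · exact Reachable.rfl
    · exact hr
  have hsep_j : SepOn (F' j) (M' j) := by
    rw [hM'j, hF'j]
    intro e he f hf hef x y hxe hyf hR
    rw [he1, fromEdgeSet_insert_eq] at hR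
    rcases reachable_sup_edge hR with h0 | ⟨ha, hb⟩ | ⟨ha, hb⟩
    · exact hsep j e he.1 f hf.1 hef x y hxe hyf h0
    · exact hsep j e2 h2 f hf.1 (fun hh => hf.2 hh.symm) v y hveq2 hyf hb
    · exact hsep j e2 h2 e he.1 (fun hh => he.2 hh.symm) v x hveq2 hxe ha.symm
  have hsep' : ∀ t, SepOn (F' t) (M' t) := by
    intro t
    rcases eq_or_ne t i with hti | hti
    · subst hti; rw [hF't _ (Ne.symm hij)]; exact hsep_i
    rcases eq_or_ne t j with htj | htj
    · subst htj; exact hsep_j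
    · rw [hF't t htj, hM't t hti htj]; exact hsep t
  have hcov : ((⋃ t, F' t) ∪ ⋃ t, M' t) = ((⋃ t, F t) ∪ ⋃ t, M t) := by
    ext x
    simp only [Set.mem_union]
    constructor
    · rintro (hx | hx)
      · obtain ⟨t, ht⟩ := Set.mem_iUnion.mp hx
        rcases memF' t x ht with hxF | ⟨-, rfl⟩
        · exact Or.inl (Set.mem_iUnion.mpr ⟨t, hxF⟩)
        · exact Or.inr (Set.mem_iUnion.mpr ⟨i, h1⟩)
      · obtain ⟨t, ht⟩ := Set.mem_iUnion.mp hx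
        rcases memM' t x ht with ⟨hxM, -, -⟩ | ⟨-, rfl⟩
        · exact Or.inr (Set.mem_iUnion.mpr ⟨t, hxM⟩)
        · exact Or.inr (Set.mem_iUnion.mpr ⟨j, h2⟩)
    · rintro (hx | hx)
      · obtain ⟨t, ht⟩ := Set.mem_iUnion.mp hx
        refine Or.inl (Set.mem_iUnion.mpr ?_)
        rcases eq_or_ne t j with htj | htj
        · exact ⟨j, by rw [hF'j]; exact Set.mem_insert_iff.mpr (Or.inr (htj ▸ ht))⟩
        · exact ⟨t, by rw [hF't t htj]; exact ht⟩
      · obtain ⟨t, ht⟩ := Set.mem_iUnion.mp hx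
        rcases eq_or_ne t i with hti | hti
        · subst hti
          rcases eq_or_ne x e1 with rfl | hx1
          · refine Or.inl (Set.mem_iUnion.mpr ⟨j, ?_⟩)
            rw [hF'j]; exact Set.mem_insert _ _
          · refine Or.inr (Set.mem_iUnion.mpr ⟨t, ?_⟩)
            rw [hM'i]; exact Set.mem_insert_iff.mpr (Or.inr ⟨ht, hx1⟩)
        rcases eq_or_ne t j with htj | htj
        · subst htj
          rcases eq_or_ne x e2 with rfl | hx2
          · refine Or.inr (Set.mem_iUnion.mpr ⟨i, ?_⟩)
            rw [hM'i]; exact Set.mem_insert _ _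
          · refine Or.inr (Set.mem_iUnion.mpr ⟨t, ?_⟩)
            rw [hM'j]; exact ⟨ht, hx2⟩
        · refine Or.inr (Set.mem_iUnion.mpr ⟨t, ?_⟩)
          rw [hM't t hti htj]; exact ht
  have hreach' : ∀ (t : Fin k) (x y : V), s(x, y) ∈ M' t →
      (fromEdgeSet (F' t)).Reachable x y := by
    intro t x y hxy
    rcases eq_or_ne t i with hti | hti
    · subst hti
      rw [hF't _ (Ne.symm hij)]
      rw [hM'i] at hxy
      rcases Set.mem_insert_iff.mp hxy with heq | ⟨hxM, -⟩
      · rw [he2, Sym2.eq_iff] at heq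
        rcases heq with ⟨rfl, rfl⟩ | ⟨rfl, rfl⟩
        · exact hr
        · exact hr.symm
      · exact hreach _ x y hxM
    rcases eq_or_ne t j with htj | htj
    · subst htj
      rw [hM'j] at hxy
      exact (hreach _ x y hxy.1).mono hmono_j
    · rw [hF't t htj]
      rw [hM't t hti htj] at hxy
      exact hreach t x y hxy
  have hFdisj' : Pairwise fun a b => Disjoint (F' a) (F' b) := by
    intro a b hab
    rw [Set.disjoint_left]
    intro x hxa hxb
    rcases memF' a x hxa with ha | ⟨rfl, ha2⟩ <;> rcases memF' b x hxb with hb | ⟨rfl, hb2⟩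
    · exact Set.disjoint_left.mp (hFdisj hab) ha hb
    · exact hFnot1 a (hb2 ▸ ha)
    · exact hFnot1 b (ha2 ▸ hb)
    · exact hab rfl
  have hMdisj' : Pairwise fun a b => Disjoint (M' a) (M' b) := by
    intro a b hab
    rw [Set.disjoint_left]
    intro x hxa hxb
    rcases memM' a x hxa with ⟨hxMa, hna1, hna2⟩ | ⟨rfl, ha2⟩ <;>
      rcases memM' b x hxb with ⟨hxMb, hnb1, hnb2⟩ | ⟨rfl, hb2⟩
    · exact Set.disjoint_left.mp (hMdisj hab) hxMa hxMb
    · exact hna2 ⟨by_contra fun h => hMdj2 a h (hb2 ▸ hxMa), hb2⟩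
    · exact hnb2 ⟨by_contra fun h => hMdj2 b h (ha2 ▸ hxMb), ha2⟩
    · exact hab rfl
  have hFM' : ∀ a b, Disjoint (F' a) (M' b) := by
    intro a b
    rw [Set.disjoint_right]
    intro x hx hxF
    rcases memF' a x hxF with hxFa | ⟨-, rfl⟩
    · rcases memM' b x hx with ⟨hxM, -, -⟩ | ⟨-, rfl⟩
      · exact Set.disjoint_left.mp (hFMd a b) hxFa hxM
      · exact hFnot2 a hxFa
    · rcases memM' b e1 hx with ⟨hxM, hnb1, -⟩ | ⟨-, h12⟩
      · exact hnb1 ⟨by_contra fun h => hMdj b h hxM, rfl⟩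
      · exact hne h12
  have hsubM : (⋃ t, M' t) ⊆ ⋃ t, M t := by
    intro x hx
    obtain ⟨t, ht⟩ := Set.mem_iUnion.mp hx
    rcases memM' t x ht with ⟨hxM, -, -⟩ | ⟨-, rfl⟩
    · exact Set.mem_iUnion.mpr ⟨t, hxM⟩
    · exact Set.mem_iUnion.mpr ⟨j, h2⟩
  have hnotin : e1 ∉ ⋃ t, M' t := by
    intro hx
    obtain ⟨t, ht⟩ := Set.mem_iUnion.mp hx
    rcases memM' t e1 ht with ⟨hxM, hn1, -⟩ | ⟨-, h12⟩
    · exact hn1 ⟨by_contra fun h => hMdj t h hxM, rfl⟩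
    · exact hne h12
  refine ⟨F', M', ⟨hFor, fun t => matching_of_sep (hsep' t), hFdisj', hMdisj', hFM',
    by rw [hcov]; exact hcover, hreach', hsep'⟩, ?_⟩
  exact Set.ncard_lt_ncard
    ((Set.ssubset_iff_of_subset hsubM).mpr ⟨e1, Set.mem_iUnion.mpr ⟨i, h1⟩, hnotin⟩)
    (Set.toFinite _)


lemma move_gamma {V : Type*} [Fintype V] [DecidableEq V] (G : SimpleGraph V) (k : ℕ)
    (F M : Fin k → Set (Sym2 V)) (hFM : IsValidPartition G k F M)
    (i j : Fin k) (hij : j ≠ i) (u v w : V)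
    (h1 : s(u, v) ∈ M i) (h2 : s(v, w) ∈ M j) (hne : s(u, v) ≠ s(v, w))
    (hnr1 : ¬ (fromEdgeSet (F j)).Reachable u v)
    (hnr2 : ¬ (fromEdgeSet (F i)).Reachable v w) :
    ∃ F' M' : Fin k → Set (Sym2 V), IsValidPartition G k F' M' ∧
      (⋃ t, M' t).ncard < (⋃ t, M t).ncard := by
  obtain ⟨hforest, hmatch, hFdisj, hMdisj, hFMd, hcover, hreach, hsep⟩ := hFM
  set e1 : Sym2 V := s(u, v) with he1
  set e2 : Sym2 V := s(v, w) with he2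
  set F' := Function.update (Function.update F j (insert e1 (F j))) i
    (insert e2 (F i)) with hF'
  set M' := Function.update (Function.update M i (M i \ {e1})) j (M j \ {e2}) with hM'
  have hF'i : F' i = insert e2 (F i) := by rw [hF', Function.update_self]
  have hF'j : F' j = insert e1 (F j) := by
    rw [hF', Function.update_of_ne hij, Function.update_self]
  have hF't : ∀ t, t ≠ i → t ≠ j → F' t = F t := fun t hti htj => by
    rw [hF', Function.update_of_ne hti, Function.update_of_ne htj]
  have hM'i : M' i = M i \ {e1} := by
    rw [hM', Function.update_of_ne (Ne.symm hij), Function.update_self]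
  have hM'j : M' j = M j \ {e2} := by rw [hM', Function.update_self]
  have hM't : ∀ t, t ≠ i → t ≠ j → M' t = M t := fun t hti htj => by
    rw [hM', Function.update_of_ne htj, Function.update_of_ne hti]
  have hveq1 : v ∈ e1 := by rw [he1]; simp
  have hveq2 : v ∈ e2 := by rw [he2]; simp
  have hMdj : ∀ t, t ≠ i → e1 ∉ M t := fun t hti hmem =>
    Set.disjoint_left.mp (hMdisj hti) hmem h1
  have hFnot1 : ∀ t, e1 ∉ F t := fun t hmem => Set.disjoint_left.mp (hFMd t i) hmem h1
  have hFnot2 : ∀ t, e2 ∉ F t := fun t hmem => Set.disjoint_left.mp (hFMd t j) hmem h2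
  have memM' : ∀ t x, x ∈ M' t →
      x ∈ M t ∧ ¬(t = i ∧ x = e1) ∧ ¬(t = j ∧ x = e2) := by
    intro t x hx
    rcases eq_or_ne t i with hti | hti
    · rw [hti, hM'i] at hx
      exact ⟨hti ▸ hx.1, fun h => hx.2 h.2, fun h => hij (h.1.symm.trans hti)⟩
    rcases eq_or_ne t j with htj | htj
    · rw [htj, hM'j] at hx
      exact ⟨htj ▸ hx.1, fun h => hti h.1, fun h => hx.2 h.2⟩
    · rw [hM't t hti htj] at hx
      exact ⟨hx, fun h => hti h.1, fun h => htj h.1⟩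
  have memF' : ∀ t x, x ∈ F' t →
      x ∈ F t ∨ (t = j ∧ x = e1) ∨ (t = i ∧ x = e2) := by
    intro t x hx
    rcases eq_or_ne t i with hti | hti
    · rw [hti, hF'i] at hx
      rcases Set.mem_insert_iff.mp hx with rfl | h
      · exact Or.inr (Or.inr ⟨hti, rfl⟩)
      · exact Or.inl (hti ▸ h)
    rcases eq_or_ne t j with htj | htj
    · rw [htj, hF'j] at hx
      rcases Set.mem_insert_iff.mp hx with rfl | h
      · exact Or.inr (Or.inl ⟨htj, rfl⟩)
      · exact Or.inl (htj ▸ h)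
    · rw [hF't t hti htj] at hx
      exact Or.inl hx
  have hFor : ∀ t, IsForestSet (F' t) := by
    intro t
    rcases eq_or_ne t i with hti | hti
    · rw [hti, hF'i]
      have : (fromEdgeSet (insert e2 (F i))).IsAcyclic := by
        rw [he2, fromEdgeSet_insert_eq]
        exact isAcyclic_sup_edge (hforest i) hnr2
      exact this
    rcases eq_or_ne t j with htj | htj
    · rw [htj, hF'j]
      have : (fromEdgeSet (insert e1 (F j))).IsAcyclic := by
        rw [he1, fromEdgeSet_insert_eq]
        exact isAcyclic_sup_edge (hforest j) hnr1
      exact this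
    · rw [hF't t hti htj]; exact hforest t
  have hmono_i : fromEdgeSet (F i) ≤ fromEdgeSet (F' i) := by
    rw [hF'i]; exact fromEdgeSet_mono (Set.subset_insert _ _)
  have hmono_j : fromEdgeSet (F j) ≤ fromEdgeSet (F' j) := by
    rw [hF'j]; exact fromEdgeSet_mono (Set.subset_insert _ _)
  have hsep_i : SepOn (F' i) (M' i) := by
    rw [hF'i, hM'i]
    intro e he f hf hef x y hxe hyf hR
    rw [he2, fromEdgeSet_insert_eq] at hR
    rcases reachable_sup_edge hR with h0 | ⟨ha, hb⟩ | ⟨ha, hb⟩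
    · exact hsep i e he.1 f hf.1 hef x y hxe hyf h0
    · exact hsep i e he.1 e1 h1 he.2 x v hxe hveq1 ha
    · exact hsep i e1 h1 f hf.1 (fun hh => hf.2 hh.symm) v y hveq1 hyf hb
  have hsep_j : SepOn (F' j) (M' j) := by
    rw [hF'j, hM'j]
    intro e he f hf hef x y hxe hyf hR
    rw [he1, fromEdgeSet_insert_eq] at hR
    rcases reachable_sup_edge hR with h0 | ⟨ha, hb⟩ | ⟨ha, hb⟩
    · exact hsep j e he.1 f hf.1 hef x y hxe hyf h0
    · exact hsep j e2 h2 f hf.1 (fun hh => hf.2 hh.symm) v y hveq2 hyf hb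
    · exact hsep j e he.1 e2 h2 he.2 x v hxe hveq2 ha
  have hsep' : ∀ t, SepOn (F' t) (M' t) := by
    intro t
    rcases eq_or_ne t i with hti | hti
    · rw [hti]; exact hsep_i
    rcases eq_or_ne t j with htj | htj
    · rw [htj]; exact hsep_j
    · rw [hF't t hti htj, hM't t hti htj]; exact hsep t
  have hcov : ((⋃ t, F' t) ∪ ⋃ t, M' t) = ((⋃ t, F t) ∪ ⋃ t, M t) := by
    ext x
    simp only [Set.mem_union]
    constructor
    · rintro (hx | hx)
      · obtain ⟨t, ht⟩ := Set.mem_iUnion.mp hx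
        rcases memF' t x ht with hxF | ⟨-, rfl⟩ | ⟨-, rfl⟩
        · exact Or.inl (Set.mem_iUnion.mpr ⟨t, hxF⟩)
        · exact Or.inr (Set.mem_iUnion.mpr ⟨i, h1⟩)
        · exact Or.inr (Set.mem_iUnion.mpr ⟨j, h2⟩)
      · obtain ⟨t, ht⟩ := Set.mem_iUnion.mp hx
        exact Or.inr (Set.mem_iUnion.mpr ⟨t, (memM' t x ht).1⟩)
    · rintro (hx | hx)
      · obtain ⟨t, ht⟩ := Set.mem_iUnion.mp hx
        refine Or.inl (Set.mem_iUnion.mpr ?_)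
        rcases eq_or_ne t i with hti | hti
        · exact ⟨i, by rw [hF'i]; exact Set.mem_insert_iff.mpr (Or.inr (hti ▸ ht))⟩
        rcases eq_or_ne t j with htj | htj
        · exact ⟨j, by rw [hF'j]; exact Set.mem_insert_iff.mpr (Or.inr (htj ▸ ht))⟩
        · exact ⟨t, by rw [hF't t hti htj]; exact ht⟩
      · obtain ⟨t, ht⟩ := Set.mem_iUnion.mp hx
        rcases eq_or_ne t i with hti | hti
        · rcases eq_or_ne x e1 with rfl | hx1
          · refine Or.inl (Set.mem_iUnion.mpr ⟨j, ?_⟩)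
            rw [hF'j]; exact Set.mem_insert _ _
          · refine Or.inr (Set.mem_iUnion.mpr ⟨i, ?_⟩)
            rw [hM'i]; exact ⟨hti ▸ ht, hx1⟩
        rcases eq_or_ne t j with htj | htj
        · rcases eq_or_ne x e2 with rfl | hx2
          · refine Or.inl (Set.mem_iUnion.mpr ⟨i, ?_⟩)
            rw [hF'i]; exact Set.mem_insert _ _
          · refine Or.inr (Set.mem_iUnion.mpr ⟨j, ?_⟩)
            rw [hM'j]; exact ⟨htj ▸ ht, hx2⟩
        · refine Or.inr (Set.mem_iUnion.mpr ⟨t, ?_⟩)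
          rw [hM't t hti htj]; exact ht
  have hreach' : ∀ (t : Fin k) (x y : V), s(x, y) ∈ M' t →
      (fromEdgeSet (F' t)).Reachable x y := by
    intro t x y hxy
    rcases eq_or_ne t i with hti | hti
    · rw [hti] at hxy ⊢
      rw [hM'i] at hxy
      exact (hreach _ x y hxy.1).mono hmono_i
    rcases eq_or_ne t j with htj | htj
    · rw [htj] at hxy ⊢
      rw [hM'j] at hxy
      exact (hreach _ x y hxy.1).mono hmono_j
    · rw [hF't t hti htj]
      rw [hM't t hti htj] at hxy
      exact hreach t x y hxy
  have hFdisj' : Pairwise fun a b => Disjoint (F' a) (F' b) := by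
    intro a b hab
    rw [Set.disjoint_left]
    intro x hxa hxb
    rcases memF' a x hxa with ha | ⟨ha1, ha2⟩ | ⟨ha1, ha2⟩ <;>
      rcases memF' b x hxb with hb | ⟨hb1, hb2⟩ | ⟨hb1, hb2⟩
    · exact Set.disjoint_left.mp (hFdisj hab) ha hb
    · exact hFnot1 a (hb2 ▸ ha)
    · exact hFnot2 a (hb2 ▸ ha)
    · exact hFnot1 b (ha2 ▸ hb)
    · exact hab ((ha1.trans hb1.symm))
    · exact hne (ha2.symm.trans hb2)
    · exact hFnot2 b (ha2 ▸ hb)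
    · exact hne (hb2.symm.trans ha2)
    · exact hab ((ha1.trans hb1.symm))
  have hMdisj' : Pairwise fun a b => Disjoint (M' a) (M' b) := by
    intro a b hab
    rw [Set.disjoint_left]
    intro x hxa hxb
    exact Set.disjoint_left.mp (hMdisj hab) (memM' a x hxa).1 (memM' b x hxb).1
  have hFM' : ∀ a b, Disjoint (F' a) (M' b) := by
    intro a b
    rw [Set.disjoint_right]
    intro x hx hxF
    obtain ⟨hxM, hnb1, hnb2⟩ := memM' b x hx
    rcases memF' a x hxF with hxFa | ⟨-, rfl⟩ | ⟨-, rfl⟩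
    · exact Set.disjoint_left.mp (hFMd a b) hxFa hxM
    · exact hnb1 ⟨by_contra fun h => hMdj b h hxM, rfl⟩
    · exact hnb2 ⟨by_contra fun h =>
        Set.disjoint_left.mp (hMdisj (h : b ≠ j)) hxM h2, rfl⟩
  have hsubM : (⋃ t, M' t) ⊆ ⋃ t, M t := by
    intro x hx
    obtain ⟨t, ht⟩ := Set.mem_iUnion.mp hx
    exact Set.mem_iUnion.mpr ⟨t, (memM' t x ht).1⟩
  have hnotin : e1 ∉ ⋃ t, M' t := by
    intro hx
    obtain ⟨t, ht⟩ := Set.mem_iUnion.mp hx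
    obtain ⟨hxM, hn1, -⟩ := memM' t e1 ht
    exact hn1 ⟨by_contra fun h => hMdj t h hxM, rfl⟩
  refine ⟨F', M', ⟨hFor, fun t => matching_of_sep (hsep' t), hFdisj', hMdisj', hFM',
    by rw [hcov]; exact hcover, hreach', hsep'⟩, ?_⟩
  exact Set.ncard_lt_ncard
    ((Set.ssubset_iff_of_subset hsubM).mpr ⟨e1, Set.mem_iUnion.mpr ⟨i, h1⟩, hnotin⟩)
    (Set.toFinite _)

lemma mem_of_getLast?_eq {α : Type*} : ∀ (l : List α) (a : α), l.getLast? = some a → a ∈ l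
  | [], a, h => by simp at h
  | [b], a, h => by
    simp only [List.getLast?_singleton, Option.some.injEq] at h
    simp [h]
  | b :: c :: l, a, h => by
    rw [List.getLast?_cons_cons] at h
    exact List.mem_cons_of_mem _ (mem_of_getLast?_eq (c :: l) a h)

lemma shrink_aux {V : Type*} [Fintype V] [DecidableEq V] (n : ℕ) :
    ∀ (G : SimpleGraph V) (k : ℕ) (F M : Fin k → Set (Sym2 V)),
      IsValidPartition G k F M →
      ∀ (a b : V) (p : (SimpleGraph.fromEdgeSet (⋃ i, M i)).Walk a b),
      p.IsPath → p.length = n → 2 ≤ p.length → ∀ (i : Fin k),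
      (∃ e : Sym2 V, p.edges.head? = some e ∧ e ∈ M i) →
      (∃ e : Sym2 V, p.edges.getLast? = some e ∧ e ∈ M i) →
      ∃ F' M' : Fin k → Set (Sym2 V), IsValidPartition G k F' M' ∧
        (⋃ j, M' j).ncard < (⋃ j, M j).ncard := by
  induction n using Nat.strong_induction_on with
  | _ n IH =>
  intro G k F M hFM a b p hp hlenn hlen i hfirst hlast
  cases p with
  | nil => simp at hlen
  | @cons _ c _ h₁ q =>
  cases q with
  | nil => simp at hlen
  | @cons _ d _ h₂ r =>
  -- extract first edge
  obtain ⟨e1', he1head, he1M⟩ := hfirst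
  rw [Walk.edges_cons, List.head?_cons, Option.some.injEq] at he1head
  subst he1head
  -- second edge
  have h₂' := (fromEdgeSet_adj _).mp h₂
  obtain ⟨j, hMj⟩ := Set.mem_iUnion.mp h₂'.1
  -- distinctness of vertices
  have hpq : (Walk.cons h₂ r).IsPath ∧ a ∉ (Walk.cons h₂ r).support :=
    (Walk.cons_isPath_iff _ _).mp hp
  have had : a ≠ d := by
    intro hh
    apply hpq.2
    rw [Walk.support_cons]
    exact List.mem_cons_of_mem _ (by rw [hh]; exact r.start_mem_support)
  have hne12 : s(a, c) ≠ s(c, d) := by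
    intro hh
    rw [Sym2.eq_iff] at hh
    rcases hh with ⟨rfl, rfl⟩ | ⟨rfl, -⟩
    · exact h₂'.2 rfl
    · exact had rfl
  have hci : c ∈ (s(a, c) : Sym2 V) := by simp
  have hcj : c ∈ (s(c, d) : Sym2 V) := by simp
  have hji : j ≠ i := by
    rintro rfl
    exact hFM.2.1 j s(a, c) he1M s(c, d) hMj hne12 c hci hcj
  -- last edge facts
  obtain ⟨el, hellast, helM⟩ := hlast
  have helq : (Walk.cons h₂ r).edges.getLast? = some el := by
    rw [Walk.edges_cons, Walk.edges_cons, List.getLast?_cons_cons] at hellast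
    rw [Walk.edges_cons]
    exact hellast
  have helmem : el ∈ (Walk.cons h₂ r).edges := mem_of_getLast?_eq _ _ helq
  have hel_ne : el ≠ s(a, c) := by
    intro hh
    have hnd := hp.edges_nodup
    rw [Walk.edges_cons] at hnd
    exact (List.nodup_cons.mp hnd).1 (hh ▸ helmem)
  -- r cannot be nil
  cases r with
  | nil =>
    rw [Walk.edges_cons, Walk.edges_nil] at helq
    simp only [List.getLast?_singleton, Option.some.injEq] at helq
    exact absurd (helq.symm ▸ helM) (fun hh => Set.disjoint_left.mp (hFM.2.2.2.1 hji) hMj hh)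
  | @cons _ x _ h₃ r' =>
  by_cases hA : (fromEdgeSet (F j)).Reachable a c
  · by_cases hB : (fromEdgeSet (F i)).Reachable c d
    · -- swap case: recurse on the tail
      obtain ⟨M', hvalid', hunion', hfirst'', hkeep⟩ :=
        move_delta G k F M hFM i j hji a c d he1M hMj hne12 hA hB
      have hHeq : (fromEdgeSet (⋃ t, M t) : SimpleGraph V) = fromEdgeSet (⋃ t, M' t) := by
        rw [hunion']
      set q₀ := Walk.cons h₂ (Walk.cons h₃ r') with hq₀
      have hsub : ∀ e ∈ q₀.edges, e ∈ (fromEdgeSet (⋃ t, M' t)).edgeSet := by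
        intro e he
        exact hHeq ▸ q₀.edges_subset_edgeSet he
      set q' := q₀.transfer _ hsub with hq'
      have hq'edges : q'.edges = q₀.edges := q₀.edges_transfer hsub
      have hq'len : q'.length = q₀.length := q₀.length_transfer hsub
      have hq₀len : q₀.length = r'.length + 2 := by simp [hq₀]
      have hnval : (Walk.cons h₁ q₀).length = n := hlenn
      have hq'path : q'.IsPath := (hp.of_cons).transfer hsub
      have hq'first : ∃ e : Sym2 V, q'.edges.head? = some e ∧ e ∈ M' i := by
        refine ⟨s(c, d), ?_, hfirst''⟩
        rw [hq'edges, hq₀, Walk.edges_cons, List.head?_cons]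
      have hq'last : ∃ e : Sym2 V, q'.edges.getLast? = some e ∧ e ∈ M' i := by
        refine ⟨el, ?_, hkeep el helM hel_ne⟩
        rw [hq'edges]
        exact helq
      obtain ⟨F'', M'', hv'', hlt⟩ := IH q'.length
        (by rw [hq'len, hq₀len]; rw [Walk.length_cons, hq₀len] at hnval; omega)
        G k F M' hvalid' c b q' hq'path rfl
        (by rw [hq'len, hq₀len]; omega) i hq'first hq'last
      refine ⟨F'', M'', hv'', ?_⟩
      rwa [hunion'] at hlt
    · -- beta case
      refine move_alpha G k F M hFM j i (Ne.symm hji) d c a ?_ ?_ ?_ ?_ hA.symm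
      · rwa [Sym2.eq_swap]
      · rwa [Sym2.eq_swap]
      · rw [Sym2.eq_swap]; rw [show s(c,a) = s(a,c) from Sym2.eq_swap]
        exact fun hh => hne12 hh.symm
      · exact fun hh => hB hh.symm
  · by_cases hB : (fromEdgeSet (F i)).Reachable c d
    · exact move_alpha G k F M hFM i j hji a c d he1M hMj hne12 hA hB
    · exact move_gamma G k F M hFM i j hji a c d he1M hMj hne12 hA hB

/-- If the surplus graph of a valid partition contains a path whose first and last edges
have the same color `i`, then there is a valid partition whose surplus edge set is
strictly smaller. -/
theorem valid_partition_shrink_of_path {V : Type*} [Fintype V] [DecidableEq V]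
    (G : SimpleGraph V) (k : ℕ) (F M : Fin k → Set (Sym2 V))
    (hFM : IsValidPartition G k F M) (H : SimpleGraph V)
    (hH : H = SimpleGraph.fromEdgeSet (⋃ i, M i)) (a b : V) (p : H.Walk a b)
    (hp : p.IsPath) (hlen : 2 ≤ p.length) (i : Fin k)
    (hfirst : ∃ e : Sym2 V, p.edges.head? = some e ∧ e ∈ M i)
    (hlast : ∃ e : Sym2 V, p.edges.getLast? = some e ∧ e ∈ M i) :
    ∃ F' M' : Fin k → Set (Sym2 V), IsValidPartition G k F' M' ∧
      (⋃ j, M' j).ncard < (⋃ j, M j).ncard := by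
  subst hH
  exact shrink_aux p.length G k F M hFM a b p hp rfl hlen i hfirst hlast
end

section
/- Let (F,M) be a valid partition with k colors of a finite simple graph G = (V,E), and let H = (V,M) be its surplus graph with M = M₁ ∪ … ∪ M_k. Let C = (V_C, E_C) be a connected component of H that contains a cycle and is colorful, i.e., each M_i contains at most one edge of E_C. Then for every vertex v ∈ V_C there is a color i such that E_C contains an edge of M_i and no edge of F_i joins v to a vertex of V_C. -/
open SimpleGraph

/-!
The component `C` is connected and contains a cycle, so it has at least as many edges as
vertices. Being colorful, its edges carry pairwise different colors, so at least `|C|` colors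
occur on `C`. A color `i` is blocked at `v` when some edge of `F i` joins `v` to another vertex
of `C`; since the forests are disjoint, distinct blocked colors use distinct such neighbours, so
at most `|C| - 1` colors are blocked. Hence some color occurring on `C` is free at `v`.
-/

namespace SimpleGraph

variable {V : Type*} {G : SimpleGraph V}

lemma Connected.card_vert_le_card_edgeSet_of_not_isAcyclic [Finite V] (hG : G.Connected)
    (hcyc : ¬G.IsAcyclic) : Nat.card V ≤ Nat.card G.edgeSet := by
  have hle := hG.card_vert_le_card_edgeSet_add_one
  have hne : Nat.card G.edgeSet + 1 ≠ Nat.card V := fun h =>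
    hcyc (isTree_iff_connected_and_card.2 ⟨hG, h⟩).isAcyclic
  omega

lemma Walk.IsCycle.induce {s : Set V} {u : V} {c : G.Walk u u} (hc : c.IsCycle)
    (hs : ∀ x ∈ c.support, x ∈ s) : (c.induce s hs).IsCycle := by
  rw [← Walk.isCycle_map_iff_of_injective (f := (Embedding.induce s).toHom)
    Subtype.val_injective, Walk.map_induce]
  exact hc

lemma ConnectedComponent.not_isAcyclic_toSimpleGraph (C : G.ConnectedComponent) {u : V}
    {c : G.Walk u u} (hc : c.IsCycle) (hu : u ∈ C) : ¬C.toSimpleGraph.IsAcyclic := by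
  classical
  have hsupp : ∀ x ∈ c.support, x ∈ C := fun x hx =>
    (ConnectedComponent.sound (c.takeUntil x hx).reachable.symm).trans hu
  exact fun hacyc => hacyc _ (hc.induce hsupp)

lemma card_edgeSet_induce_le_ncard_colors {ι : Type*} [Finite ι] (s : Set V)
    (M : ι → Set (Sym2 V)) (hcover : G.edgeSet ⊆ ⋃ i, M i)
    (hcolorful : ∀ i, ∀ e ∈ M i, ∀ f ∈ M i, (∀ x ∈ e, x ∈ s) → (∀ x ∈ f, x ∈ s) → e = f) :
    Nat.card (G.induce s).edgeSet ≤ {i | ∃ e ∈ M i, ∀ x ∈ e, x ∈ s}.ncard := by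
  have hmem : ∀ e : Sym2 s, ∀ x ∈ e.map (↑), x ∈ s := by
    intro e x hx
    obtain ⟨y, -, rfl⟩ := Sym2.mem_map.1 hx
    exact y.2
  have hcol : ∀ e : (G.induce s).edgeSet, ∃ i, e.1.map (↑) ∈ M i := by
    rintro ⟨⟨x, y⟩, he⟩
    exact Set.mem_iUnion.1 (hcover (by simpa using he))
  choose col hcol using hcol
  rw [← Nat.card_coe_set_eq]
  refine Nat.card_le_card_of_injective (fun e => ⟨col e, _, hcol e, hmem e⟩) fun e f hef => ?_
  have hcolef : col e = col f := congrArg Subtype.val hef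
  exact Subtype.ext <| Sym2.map.injective Subtype.val_injective
    (hcolorful _ _ (hcol e) _ (hcolef ▸ hcol f) (hmem e) (hmem f))

lemma ncard_colors_joining_lt {ι : Type*} {F : ι → Set (Sym2 V)}
    (hdisj : Pairwise fun i j => Disjoint (F i) (F j)) (hloopless : ∀ i, ∀ e ∈ F i, ¬e.IsDiag)
    {s : Set V} (hs : s.Finite) {v : V} (hv : v ∈ s) :
    {i | ∃ u ∈ s, s(v, u) ∈ F i}.ncard < s.ncard := by
  have : Nonempty V := ⟨v⟩
  have hjoin : ∀ i ∈ {i | ∃ u ∈ s, s(v, u) ∈ F i}, ∃ u ∈ s, s(v, u) ∈ F i := fun _ hi => hi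
  choose! g hgs hgF using hjoin
  calc {i | ∃ u ∈ s, s(v, u) ∈ F i}.ncard ≤ (s \ {v}).ncard := by
        refine Set.ncard_le_ncard_of_injOn g (fun i hi => ⟨hgs i hi, fun hgv => ?_⟩)
          (fun i hi j hj hij => by_contra fun hne => ?_) hs.sdiff
        · exact hloopless i _ (hgF i hi) (by rw [Set.mem_singleton_iff.1 hgv]; rfl)
        · exact Set.disjoint_left.1 (hdisj hne) (hgF i hi) (hij ▸ hgF j hj)
    _ < s.ncard := Set.ncard_sdiff_singleton_lt_of_mem hv hs

end SimpleGraph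

theorem colorful_cyclic_component_has_free_color_general {V : Type*} [Fintype V]
    (G : SimpleGraph V) (k : ℕ) (F M : Fin k → Set (Sym2 V))
    (hFM : IsValidPartition G k F M) (H : SimpleGraph V)
    (hH : H = SimpleGraph.fromEdgeSet (⋃ i, M i)) (w₀ : V)
    (hcyc : ∃ (u : V) (c : H.Walk u u), c.IsCycle ∧ H.Reachable u w₀)
    (hcolorful : ∀ i : Fin k, ∀ e ∈ M i, ∀ f ∈ M i,
      (∀ x ∈ e, H.Reachable x w₀) → (∀ x ∈ f, H.Reachable x w₀) → e = f)
    (v : V) (hv : H.Reachable v w₀) :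
    ∃ i : Fin k, (∃ e ∈ M i, ∀ x ∈ e, H.Reachable x w₀) ∧
      ∀ u : V, H.Reachable u w₀ → s(v, u) ∉ F i := by
  obtain ⟨-, -, hFdisj, -, -, hunion, -, -⟩ := hFM
  set C := H.connectedComponentMk w₀
  have hmemC : ∀ x, x ∈ C ↔ H.Reachable x w₀ := fun _ => ConnectedComponent.eq
  simp_rw [← hmemC] at hcyc hcolorful hv ⊢
  obtain ⟨u, c, hc, hu⟩ := hcyc
  have hcover : H.edgeSet ⊆ ⋃ i, M i := by
    rw [hH, edgeSet_fromEdgeSet]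
    exact Set.sdiff_subset
  have hloopless : ∀ i, ∀ e ∈ F i, ¬e.IsDiag := fun i _ he =>
    G.not_isDiag_of_mem_edgeSet (hunion ▸ Or.inl (Set.mem_iUnion.2 ⟨i, he⟩))
  have hcount := calc
    {i | ∃ u ∈ C, s(v, u) ∈ F i}.ncard < (C : Set V).ncard :=
      ncard_colors_joining_lt hFdisj hloopless (Set.toFinite _) hv
    _ ≤ Nat.card C.toSimpleGraph.edgeSet :=
      C.connected_toSimpleGraph.card_vert_le_card_edgeSet_of_not_isAcyclic
        (C.not_isAcyclic_toSimpleGraph hc hu)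
    _ ≤ {i | ∃ e ∈ M i, ∀ x ∈ e, x ∈ C}.ncard :=
      card_edgeSet_induce_le_ncard_colors _ M hcover hcolorful
  obtain ⟨i, hiU, hiB⟩ := Set.exists_mem_notMem_of_ncard_lt_ncard hcount
  exact ⟨i, hiU, fun u hu hF => hiB ⟨u, hu, hF⟩⟩

/-- Let `C` be a connected component (the component of the vertex `w₀`) of the surplus
graph `H` of a valid partition. If `C` contains a cycle and is colorful (each `M i`
contains at most one edge of `C`), then for every vertex `v` of `C` there is a color `i`
such that `C` contains an edge of `M i` and no edge of `F i` joins `v` to a vertex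
of `C`. -/
theorem colorful_cyclic_component_has_free_color {V : Type*} [Fintype V] [DecidableEq V]
    (G : SimpleGraph V) (k : ℕ) (F M : Fin k → Set (Sym2 V))
    (hFM : IsValidPartition G k F M) (H : SimpleGraph V)
    (hH : H = SimpleGraph.fromEdgeSet (⋃ i, M i)) (w₀ : V)
    (hcyc : ∃ (u : V) (c : H.Walk u u), c.IsCycle ∧ H.Reachable u w₀)
    (hcolorful : ∀ i : Fin k, ∀ e ∈ M i, ∀ f ∈ M i,
      (∀ x ∈ e, H.Reachable x w₀) → (∀ x ∈ f, H.Reachable x w₀) → e = f)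
    (v : V) (hv : H.Reachable v w₀) :
    ∃ i : Fin k, (∃ e ∈ M i, ∀ x ∈ e, H.Reachable x w₀) ∧
      ∀ u : V, H.Reachable u w₀ → s(v, u) ∉ F i :=
  colorful_cyclic_component_has_free_color_general G k F M hFM H hH w₀ hcyc hcolorful v hv
end

section
/- Let G = (V,E) be a finite simple graph, let P ⊆ E be a pseudoforest and let L ⊆ E be a linear forest with P ∩ L = ∅. Then there exists a matching M ⊆ P containing exactly one edge from each cycle of (V,P) such that L ∪ M¹ is a linear forest, where M¹ = { {u,v} ∈ M : deg_L(u) = 1 and deg_L(v) = 1 } and deg_L denotes degree in the subgraph (V,L). -/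
open SimpleGraph

/-!
Induction on `|P|`. Take a cycle `C` of `P` and let `P'` be the edges of `P` outside the
component of `C`. Then `P'` is again a pseudoforest, and induction gives a matching `M'` whose
edges avoid the vertices of `C`; put `M = M' ∪ {e}` for an edge `e` of `C`. If some vertex of `C`
does not have degree one in `L`, take `e` through it, so that `M¹ = M'¹`. Otherwise every vertex
of `C` is an end of a path of the linear forest `L ∪ M'¹`; among three consecutive vertices
`u, v, w` of `C` at most two are ends of the same path, so `uv` or `vw` joins two different paths
and may be added.
-/

namespace SimpleGraph

variable {V : Type*}

theorem Walk.reachable_of_mem_support {G : SimpleGraph V} {x y z : V} (p : G.Walk x y)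
    (hz : z ∈ p.support) : G.Reachable x z := by
  obtain ⟨q, _, rfl⟩ := Walk.mem_support_iff_exists_append.mp hz
  exact q.reachable

theorem Walk.mem_of_mem_edges_fromEdgeSet {S : Set (Sym2 V)} {x y : V}
    {p : (fromEdgeSet S).Walk x y} {e : Sym2 V} (he : e ∈ p.edges) : e ∈ S := by
  have := p.edges_subset_edgeSet he
  rw [edgeSet_fromEdgeSet] at this
  exact this.1

theorem Walk.IsCycle.exists_consecutive_edges {G : SimpleGraph V} {u : V} {c : G.Walk u u}
    (hc : c.IsCycle) :
    ∃ v w : V, u ≠ v ∧ v ≠ w ∧ u ≠ w ∧ s(u, v) ∈ c.edges ∧ s(v, w) ∈ c.edges := by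
  cases c with
  | nil => exact absurd hc Walk.not_isCycle_nil
  | @cons _ v _ huv c =>
    cases c with
    | nil => exact absurd rfl huv.ne
    | @cons _ w _ hvw c =>
      have hnd := hc.edges_nodup
      rw [Walk.edges_cons, Walk.edges_cons, List.nodup_cons] at hnd
      have huw : u ≠ w := by
        rintro rfl
        exact hnd.1 (by rw [Sym2.eq_swap]; exact List.mem_cons_self)
      exact ⟨v, w, huv.ne, hvw.ne, huw, by simp, by simp⟩

section Degree

variable {H : SimpleGraph V} [H.LocallyFinite]

theorem one_lt_degree_of_adj {x a b : V} (ha : H.Adj x a) (hb : H.Adj x b) (hab : a ≠ b) :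
    1 < H.degree x := by
  rw [← card_neighborFinset_eq_degree]
  exact Finset.one_lt_card.mpr ⟨a, by simpa using ha, b, by simpa using hb, hab⟩

theorem two_lt_degree_of_adj {x a b c : V} (ha : H.Adj x a) (hb : H.Adj x b) (hc : H.Adj x c)
    (hab : a ≠ b) (hac : a ≠ c) (hbc : b ≠ c) : 2 < H.degree x := by
  rw [← card_neighborFinset_eq_degree]
  exact Finset.two_lt_card.mpr
    ⟨a, by simpa using ha, b, by simpa using hb, c, by simpa using hc, hab, hac, hbc⟩

/-- With maximum degree two, a path entering `x` from `t` has no choice of continuation, so two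
such paths stop at the first vertex of degree at most one, which is the same for both. -/
theorem Walk.IsPath.eq_of_degree_le_one (hmax : ∀ x, H.degree x ≤ 2) {x v w t : V}
    {p : H.Walk x v} {q : H.Walk x w} (hp : p.IsPath) (hq : q.IsPath) (ht : H.Adj t x)
    (htp : t ∉ p.support) (htq : t ∉ q.support) (hv : H.degree v ≤ 1) (hw : H.degree w ≤ 1) :
    v = w := by
  induction p generalizing t with
  | nil =>
    cases q with
    | nil => rfl
    | @cons _ b _ hxb q =>
      have htb : t ≠ b := fun h => htq (by simp [h])
      exact absurd hv (one_lt_degree_of_adj ht.symm hxb htb).not_ge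
  | @cons x y v hxy p ih =>
    have hty : t ≠ y := fun h => htp (by simp [h])
    cases q with
    | nil => exact absurd hw (one_lt_degree_of_adj ht.symm hxy hty).not_ge
    | @cons _ z _ hxz q =>
      have htz : t ≠ z := fun h => htq (by simp [h])
      obtain rfl : y = z := by
        by_contra hyz
        exact (two_lt_degree_of_adj ht.symm hxy hxz hty htz hyz).not_ge (hmax x)
      rw [Walk.cons_isPath_iff] at hp hq
      exact ih hp.1 hq.1 hxy hp.2 hq.2 hv

theorem eq_of_reachable_of_degree_le_one (hmax : ∀ x, H.degree x ≤ 2) {u v w : V}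
    (hu : H.degree u ≤ 1) (hv : H.degree v ≤ 1) (hw : H.degree w ≤ 1) (huv : u ≠ v)
    (huw : u ≠ w) (hrv : H.Reachable u v) (hrw : H.Reachable u w) : v = w := by
  obtain ⟨p, hp⟩ := hrv.exists_isPath
  obtain ⟨q, hq⟩ := hrw.exists_isPath
  cases p with
  | nil => exact absurd rfl huv
  | @cons _ a _ hua p =>
    cases q with
    | nil => exact absurd rfl huw
    | @cons _ b _ hub q =>
      obtain rfl : a = b := by
        by_contra hab
        exact (one_lt_degree_of_adj hua hub hab).not_ge hu
      rw [Walk.cons_isPath_iff] at hp hq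
      exact hp.1.eq_of_degree_le_one hmax hq.1 hua hp.2 hq.2 hv hw

end Degree

theorem degree_fromEdgeSet_le [Finite V] (S : Set (Sym2 V)) [(fromEdgeSet S).LocallyFinite]
    (x : V) : (fromEdgeSet S).degree x ≤ {e ∈ S | x ∈ e}.ncard := by
  rw [← card_neighborSet_eq_degree, ← Nat.card_eq_fintype_card, Nat.card_coe_set_eq]
  refine Set.ncard_le_ncard_of_injOn (fun y => s(x, y)) (fun y hy => ?_) (fun y _ z _ h => ?_)
  · exact ⟨((fromEdgeSet_adj S).mp hy).1, Sym2.mem_mk_left x y⟩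
  · exact Sym2.congr_right.mp h

end SimpleGraph

section EdgeSets

variable {V : Type*}

theorem IsMatchingSet.insert {M : Set (Sym2 V)} (hM : IsMatchingSet M) {e : Sym2 V}
    (he : ∀ f ∈ M, ∀ x ∈ e, x ∉ f) : IsMatchingSet (insert e M) := by
  rintro f (rfl | hf) g (rfl | hg) hfg x hxf
  · exact absurd rfl hfg
  · exact he g hg x hxf
  · exact fun hxg => he f hf x hxg hxf
  · exact hM f hf g hg hfg x hxf

theorem GraphIsPseudoforest.anti_s11 {G H : SimpleGraph V} (hGH : G ≤ H) (hH : GraphIsPseudoforest H) :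
    GraphIsPseudoforest G := by
  intro u v c d hc hd huv e
  simpa only [Walk.edges_mapLe_eq_edges] using
    hH (c.mapLe hGH) (d.mapLe hGH) ((Walk.isCycle_mapLe hGH).mpr hc)
      ((Walk.isCycle_mapLe hGH).mpr hd) (huv.mono hGH) e

theorem IsPseudoforestSet.subset {P Q : Set (Sym2 V)} (hP : IsPseudoforestSet P) (hQP : Q ⊆ P) :
    IsPseudoforestSet Q :=
  GraphIsPseudoforest.anti_s11 (fromEdgeSet_mono hQP) hP

variable [Finite V]

theorem IsLinearForestSet.insert_edge {S : Set (Sym2 V)} (hS : IsLinearForestSet S) {a b : V}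
    (ha : {e ∈ S | a ∈ e}.ncard ≤ 1) (hb : {e ∈ S | b ∈ e}.ncard ≤ 1)
    (hab : ¬ (fromEdgeSet S).Reachable a b) : IsLinearForestSet (insert s(a, b) S) := by
  refine ⟨?_, fun z => ?_⟩
  · rw [Set.insert_eq, fromEdgeSet_union, sup_comm]
    exact hS.1.sup_edge_of_not_reachable hab
  by_cases hz : z ∈ s(a, b)
  · have hz1 : {e ∈ S | z ∈ e}.ncard ≤ 1 := by
      rcases Sym2.mem_iff.mp hz with rfl | rfl <;> assumption
    calc {e ∈ insert s(a, b) S | z ∈ e}.ncard ≤ (insert s(a, b) {e ∈ S | z ∈ e}).ncard :=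
          Set.ncard_le_ncard fun e ⟨he, hze⟩ => he.imp id fun h => ⟨h, hze⟩
      _ ≤ 2 := (Set.ncard_insert_le _ _).trans (by omega)
  · calc {e ∈ insert s(a, b) S | z ∈ e}.ncard ≤ {e ∈ S | z ∈ e}.ncard :=
          Set.ncard_le_ncard fun e ⟨he, hze⟩ =>
            ⟨he.resolve_left (by rintro rfl; exact hz hze), hze⟩
      _ ≤ 2 := hS.2 z

theorem IsLinearForestSet.exists_mem_edges_insert {S : Set (Sym2 V)} (hS : IsLinearForestSet S)
    {G : SimpleGraph V} {u : V} {c : G.Walk u u} (hc : c.IsCycle)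
    (hdeg : ∀ e ∈ c.edges, ∀ x ∈ e, {f ∈ S | x ∈ f}.ncard ≤ 1) :
    ∃ e ∈ c.edges, IsLinearForestSet (insert e S) := by
  classical
  have := Fintype.ofFinite V
  obtain ⟨v, w, huv, hvw, huw, hcuv, hcvw⟩ := hc.exists_consecutive_edges
  have hu := hdeg _ hcuv u (Sym2.mem_mk_left u v)
  have hv := hdeg _ hcuv v (Sym2.mem_mk_right u v)
  have hw := hdeg _ hcvw w (Sym2.mem_mk_right v w)
  by_cases hruv : (fromEdgeSet S).Reachable u v
  · by_cases hrvw : (fromEdgeSet S).Reachable v w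
    · have deg := degree_fromEdgeSet_le S
      exact absurd (eq_of_reachable_of_degree_le_one (fun x => (deg x).trans (hS.2 x))
        ((deg v).trans hv) ((deg u).trans hu) ((deg w).trans hw) huv.symm hvw hruv.symm hrvw) huw
    · exact ⟨_, hcvw, hS.insert_edge hv hw hrvw⟩
  · exact ⟨_, hcuv, hS.insert_edge hu hv hruv⟩

end EdgeSets

section Matching

variable {V : Type*}

/-- The set `M¹` of the paper. -/
def edgesJoiningLeaves (L M : Set (Sym2 V)) : Set (Sym2 V) :=
  {e ∈ M | ∀ x ∈ e, {f ∈ L | x ∈ f}.ncard = 1}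

theorem edgesJoiningLeaves_insert_of_forall {L M : Set (Sym2 V)} {e : Sym2 V}
    (he : ∀ x ∈ e, {f ∈ L | x ∈ f}.ncard = 1) :
    edgesJoiningLeaves L (insert e M) = insert e (edgesJoiningLeaves L M) := by
  ext f
  simp only [edgesJoiningLeaves, Set.mem_ofPred_eq, Set.mem_insert_iff]
  grind

theorem edgesJoiningLeaves_insert_of_exists {L M : Set (Sym2 V)} {e : Sym2 V}
    (he : ∃ x ∈ e, {f ∈ L | x ∈ f}.ncard ≠ 1) :
    edgesJoiningLeaves L (insert e M) = edgesJoiningLeaves L M := by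
  ext f
  simp only [edgesJoiningLeaves, Set.mem_ofPred_eq, Set.mem_insert_iff]
  grind

theorem IsLinearForestSet.exists_mem_edges_union_edgesJoiningLeaves_insert [Finite V]
    {L M : Set (Sym2 V)} (hLM : IsLinearForestSet (L ∪ edgesJoiningLeaves L M))
    {G : SimpleGraph V} {u : V} {c : G.Walk u u} (hc : c.IsCycle)
    (hMc : ∀ f ∈ M, ∀ x ∈ f, x ∉ c.support) :
    ∃ e ∈ c.edges, IsLinearForestSet (L ∪ edgesJoiningLeaves L (insert e M)) := by
  by_cases hleaf : ∀ e ∈ c.edges, ∀ x ∈ e, {f ∈ L | x ∈ f}.ncard = 1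
  · have hdeg : ∀ e ∈ c.edges, ∀ x ∈ e,
        {f ∈ L ∪ edgesJoiningLeaves L M | x ∈ f}.ncard ≤ 1 := by
      intro e he x hx
      have hxM : ∀ f ∈ M, x ∉ f := fun f hf hxf =>
        hMc f hf x hxf (c.mem_support_of_mem_edges he hx)
      have : {f ∈ L ∪ edgesJoiningLeaves L M | x ∈ f} = {f ∈ L | x ∈ f} := by
        ext f
        simp only [edgesJoiningLeaves, Set.mem_ofPred_eq, Set.mem_union]
        grind
      exact this ▸ (hleaf e he x hx).le
    obtain ⟨e, he, hins⟩ := hLM.exists_mem_edges_insert hc hdeg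
    refine ⟨e, he, ?_⟩
    rwa [edgesJoiningLeaves_insert_of_forall (hleaf e he), Set.union_insert]
  · push Not at hleaf
    obtain ⟨e, he, x, hx, hx1⟩ := hleaf
    exact ⟨e, he, by rwa [edgesJoiningLeaves_insert_of_exists ⟨x, hx, hx1⟩]⟩

def edgesOffComponent (P : Set (Sym2 V)) (u : V) : Set (Sym2 V) :=
  {e ∈ P | ∀ x ∈ e, ¬ (fromEdgeSet P).Reachable u x}

section OffComponent

variable {P : Set (Sym2 V)} {u : V}

theorem edgesOffComponent_subset : edgesOffComponent P u ⊆ P :=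
  Set.sep_subset _ _

theorem ncard_edgesOffComponent_lt [Finite V] {v : V} (huv : (fromEdgeSet P).Adj u v) :
    (edgesOffComponent P u).ncard < P.ncard :=
  Set.ncard_lt_ncard ⟨edgesOffComponent_subset, fun h =>
    (h ((fromEdgeSet_adj P).mp huv).1).2 u (Sym2.mem_mk_left u v) .rfl⟩

theorem notMem_edgesOffComponent_of_mem_edges {z y : V} {p : (fromEdgeSet P).Walk z y}
    (hz : (fromEdgeSet P).Reachable u z) {e : Sym2 V} (he : e ∈ p.edges) :
    e ∉ edgesOffComponent P u := fun h =>
  h.2 _ (Sym2.out_fst_mem e)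
    (hz.trans (p.reachable_of_mem_support (p.mem_support_of_mem_edges he (Sym2.out_fst_mem e))))

theorem mem_edgeSet_edgesOffComponent_of_mem_edges {z y : V} {p : (fromEdgeSet P).Walk z y}
    (hz : ¬ (fromEdgeSet P).Reachable u z) {e : Sym2 V} (he : e ∈ p.edges) :
    e ∈ (fromEdgeSet (edgesOffComponent P u)).edgeSet := by
  have hpe := p.edges_subset_edgeSet he
  rw [edgeSet_fromEdgeSet] at hpe ⊢
  exact ⟨⟨hpe.1, fun x hx hux =>
    hz (hux.trans (p.reachable_of_mem_support (p.mem_support_of_mem_edges he hx)).symm)⟩, hpe.2⟩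

/-- A cycle through the component of `u` has the edges of `C`, so `e` is its only edge in
`insert e M`; any other cycle is a cycle of `edgesOffComponent P u`. -/
theorem existsUnique_mem_edges_insert_of_isCycle (hP : IsPseudoforestSet P)
    {C : (fromEdgeSet P).Walk u u} (hC : C.IsCycle) {e : Sym2 V} (he : e ∈ C.edges)
    {M : Set (Sym2 V)} (hM : M ⊆ edgesOffComponent P u)
    (hMcyc : ∀ ⦃z : V⦄ (d : (fromEdgeSet (edgesOffComponent P u)).Walk z z), d.IsCycle →
      ∃! f : Sym2 V, f ∈ d.edges ∧ f ∈ M)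
    {z : V} {d : (fromEdgeSet P).Walk z z} (hd : d.IsCycle) :
    ∃! f : Sym2 V, f ∈ d.edges ∧ f ∈ insert e M := by
  by_cases hz : (fromEdgeSet P).Reachable u z
  · refine ⟨e, ⟨(hP C d hC hd hz e).mp he, Set.mem_insert _ _⟩, ?_⟩
    rintro f ⟨hfd, rfl | hfM⟩
    · rfl
    · exact absurd (hM hfM) (notMem_edgesOffComponent_of_mem_edges hz hfd)
  · have hdP := fun f (hf : f ∈ d.edges) => mem_edgeSet_edgesOffComponent_of_mem_edges hz hf
    have hed : e ∉ d.edges := fun hed =>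
      notMem_edgesOffComponent_of_mem_edges .rfl he
        ((d.transfer _ hdP).mem_of_mem_edges_fromEdgeSet (by rwa [Walk.edges_transfer]))
    obtain ⟨f, ⟨hfd, hfM⟩, hf⟩ := hMcyc (d.transfer _ hdP) (hd.transfer hdP)
    rw [Walk.edges_transfer] at hfd
    refine ⟨f, ⟨hfd, Set.mem_insert_of_mem _ hfM⟩, ?_⟩
    rintro g ⟨hgd, rfl | hgM⟩
    · exact absurd hgd hed
    · exact hf g ⟨by rwa [Walk.edges_transfer], hgM⟩

end OffComponent

end Matching

theorem exists_matching_compatible_with_linear_forest_general {V : Type*} [Fintype V]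
    (P L : Set (Sym2 V)) (hP : IsPseudoforestSet P) (hL : IsLinearForestSet L) :
    ∃ M ⊆ P, IsMatchingSet M ∧
      (∀ ⦃u : V⦄ (c : (SimpleGraph.fromEdgeSet P).Walk u u), c.IsCycle →
        ∃! e : Sym2 V, e ∈ c.edges ∧ e ∈ M) ∧
      IsLinearForestSet (L ∪ {e ∈ M | ∀ x ∈ e, {f ∈ L | x ∈ f}.ncard = 1}) := by
  induction hn : P.ncard using Nat.strong_induction_on generalizing P with
  | _ n ih =>
  subst hn
  by_cases hcyc : ∃ (u : V) (C : (fromEdgeSet P).Walk u u), C.IsCycle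
  swap
  · push Not at hcyc
    refine ⟨∅, Set.empty_subset _, fun e he => absurd he (Set.notMem_empty e),
      fun u c hc => absurd hc (hcyc u c), ?_⟩
    simpa using hL
  obtain ⟨u, C, hC⟩ := hcyc
  obtain ⟨v, -, -, -, -, huvC, -⟩ := hC.exists_consecutive_edges
  obtain ⟨M, hMP, hM, hMcyc, hML⟩ := ih _ (ncard_edgesOffComponent_lt (C.adj_of_mem_edges huvC))
    _ (hP.subset edgesOffComponent_subset) rfl
  have hMC : ∀ f ∈ M, ∀ x ∈ f, x ∉ C.support := fun f hf x hxf hxC =>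
    (hMP hf).2 x hxf (C.reachable_of_mem_support hxC)
  obtain ⟨e, heC, heL⟩ := IsLinearForestSet.exists_mem_edges_union_edgesJoiningLeaves_insert
    hML hC hMC
  refine ⟨insert e M, Set.insert_subset (Walk.mem_of_mem_edges_fromEdgeSet heC)
    (hMP.trans edgesOffComponent_subset), hM.insert fun f hf x hxe hxf =>
      hMC f hf x hxf (C.mem_support_of_mem_edges heC hxe),
    fun z d hd => existsUnique_mem_edges_insert_of_isCycle hP hC heC hMP hMcyc hd, heL⟩

/-- Given a pseudoforest `P` and a linear forest `L` disjoint from it, there is a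
matching `M ⊆ P` containing exactly one edge from each cycle of `(V, P)` such that
`L ∪ M¹` is a linear forest, where `M¹` consists of those edges of `M` both of whose
endpoints have degree one in `(V, L)`. -/
theorem exists_matching_compatible_with_linear_forest {V : Type*} [Fintype V]
    [DecidableEq V] (G : SimpleGraph V) (P L : Set (Sym2 V)) (hPE : P ⊆ G.edgeSet)
    (hLE : L ⊆ G.edgeSet) (hP : IsPseudoforestSet P) (hL : IsLinearForestSet L)
    (hdisj : P ∩ L = ∅) :
    ∃ M ⊆ P, IsMatchingSet M ∧
      (∀ ⦃u : V⦄ (c : (SimpleGraph.fromEdgeSet P).Walk u u), c.IsCycle →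
        ∃! e : Sym2 V, e ∈ c.edges ∧ e ∈ M) ∧
      IsLinearForestSet (L ∪ {e ∈ M | ∀ x ∈ e, {f ∈ L | x ∈ f}.ncard = 1}) :=
  exists_matching_compatible_with_linear_forest_general P L hP hL
end

section
/- If the edge set of a finite simple graph G = (V,E) is partitioned into k pseudoforests, then E can be partitioned into ⌈4k/3⌉ forests. -/
open SimpleGraph

/-!
Inside any vertex set `U`, a pseudoforest has at most `|U|` edges, so `G` has at most
`min (k * |U|) (|U| choose 2) ≤ ⌈4k/3⌉ * (|U| - 1)` edges inside `U`. By Nash-Williams' theorem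
this density bound yields a partition of `E` into `⌈4k/3⌉` forests.

Nash-Williams' theorem is proved by the augmenting argument. Take `n` disjoint forests of maximum
total size and suppose an edge `e₀` is left over. Maximality forces the ends of an uncovered edge
to be joined in every forest, so it can be swapped against any edge of the path joining them,
which becomes uncovered in turn. Let `D` be the set of edges reachable by such swaps and `U` the
vertices `D`-connected to an end of `e₀`. Swaps inside `D` do not change connectivity of the
forests restricted to `D`, so each original forest restricted to `D` connects `U`. This gives
`n * (|U| - 1) + 1` edges inside `U`, contradicting the density bound.
-/

namespace SimpleGraph

variable {V W : Type*} {G : SimpleGraph V}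

theorem GraphIsPseudoforest.comap {G' : SimpleGraph W} (f : G →g G') (hf : Function.Injective f)
    (h : GraphIsPseudoforest G') : GraphIsPseudoforest G := by
  intro u v c d hc hd huv e
  have := h (c.map f) (d.map f) (hc.map hf) (hd.map hf) (huv.map f) (Sym2.map f e)
  simpa only [Walk.edges_map, List.mem_map_of_injective (Sym2.map.injective hf)] using this

theorem GraphIsPseudoforest.induce (h : GraphIsPseudoforest G) (U : Set V) :
    GraphIsPseudoforest (G.induce U) :=
  h.comap (Embedding.induce (G := G) U).toHom (Embedding.induce (G := G) U).injective

theorem natCard_edgeSet_induce (U : Set V) :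
    Nat.card (G.induce U).edgeSet = (G.edgeSet ∩ U.sym2).ncard := by
  have himage : Sym2.map Subtype.val '' (G.induce U).edgeSet = G.edgeSet ∩ U.sym2 := by
    ext ⟨a, b⟩
    constructor
    · rintro ⟨⟨⟨a', ha'⟩, ⟨b', hb'⟩⟩, he', hmap⟩
      rw [← hmap]
      exact ⟨he', ha', hb'⟩
    · rintro ⟨hab, ha, hb⟩
      exact ⟨s(⟨a, ha⟩, ⟨b, hb⟩), hab, rfl⟩
  rw [← himage, Set.ncard_image_of_injective _ (Sym2.map.injective Subtype.val_injective),
    Nat.card_coe_set_eq]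

theorem ncard_edgeSet_inter_sym2_le_choose_two [Finite V] (G : SimpleGraph V) (U : Set V) :
    (G.edgeSet ∩ U.sym2).ncard ≤ U.ncard.choose 2 := by
  classical
  have := Fintype.ofFinite U
  rw [← natCard_edgeSet_induce, ← Nat.card_coe_set_eq U, Nat.card_eq_fintype_card,
    Nat.card_eq_fintype_card, ← edgeFinset_card]
  exact card_edgeFinset_le_card_choose_two

theorem Connected.card_edgeSet_le_of_graphIsPseudoforest [Finite V] (hG : G.Connected)
    (hpf : GraphIsPseudoforest G) : Nat.card G.edgeSet ≤ Nat.card V := by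
  by_cases hacyc : G.IsAcyclic
  · have := (isTree_iff_connected_and_card.mp ⟨hG, hacyc⟩).2
    omega
  obtain ⟨u, c, hc⟩ : ∃ (u : V) (c : G.Walk u u), c.IsCycle := by
    simpa [IsAcyclic] using hacyc
  obtain ⟨⟨a, b⟩, he⟩ := List.exists_mem_of_ne_nil _ (Walk.edges_eq_nil.not.mpr hc.not_nil)
  have hbridge : ¬ G.IsBridge s(a, b) := fun hb => hb.notMem_edges_of_isCycle hc he
  have htree : (G.deleteEdges {s(a, b)}).IsTree := by
    refine ⟨hG.connected_delete_edge_of_not_isBridge hbridge, fun v d hd => ?_⟩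
    have hmem := (hpf c _ hc (hd.mapLe (deleteEdges_le _)) (hG.preconnected u v) s(a, b)).mp he
    rw [Walk.edges_mapLe_eq_edges] at hmem
    simpa [edgeSet_deleteEdges] using d.edges_subset_edgeSet hmem
  have hcard := (isTree_iff_connected_and_card.mp htree).2
  rw [edgeSet_deleteEdges, Nat.card_coe_set_eq,
    Set.ncard_sdiff_singleton_add_one (c.edges_subset_edgeSet he)] at hcard
  rw [Nat.card_coe_set_eq, hcard]

theorem GraphIsPseudoforest.card_edgeSet_le [Finite V] (hpf : GraphIsPseudoforest G) :
    Nat.card G.edgeSet ≤ Nat.card V := by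
  have := Fintype.ofFinite G.ConnectedComponent
  have hsub : G.edgeSet ⊆ ⋃ C : G.ConnectedComponent, G.edgeSet ∩ C.supp.sym2 := by
    rintro ⟨a, b⟩ he
    refine Set.mem_iUnion.mpr ⟨G.connectedComponentMk a, he, rfl, ?_⟩
    exact ConnectedComponent.sound (G.mem_edgeSet.mp he).reachable.symm
  calc Nat.card G.edgeSet = G.edgeSet.ncard := Nat.card_coe_set_eq _
    _ ≤ ∑ C : G.ConnectedComponent, (G.edgeSet ∩ C.supp.sym2).ncard :=
      (Set.ncard_le_ncard hsub).trans (Set.ncard_iUnion_le_of_fintype _)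
    _ ≤ ∑ C : G.ConnectedComponent, C.supp.ncard := by
      refine Finset.sum_le_sum fun C _ => ?_
      rw [← natCard_edgeSet_induce, ← Nat.card_coe_set_eq]
      exact C.connected_toSimpleGraph.card_edgeSet_le_of_graphIsPseudoforest (hpf.induce _)
    _ = Nat.card V := by
      rw [← finsum_eq_sum_of_fintype, ← Set.ncard_iUnion_of_finite (fun _ => Set.toFinite _)
        G.pairwise_disjoint_supp_connectedComponent, G.iUnion_connectedComponentSupp,
        Set.ncard_univ]

theorem GraphIsPseudoforest.ncard_edgeSet_inter_sym2_le [Finite V] (hpf : GraphIsPseudoforest G)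
    (U : Set V) : (G.edgeSet ∩ U.sym2).ncard ≤ U.ncard := by
  rw [← natCard_edgeSet_induce, ← Nat.card_coe_set_eq]
  exact (hpf.induce U).card_edgeSet_le

theorem ncard_le_ncard_add_one_of_reachable [Finite V] {Q : Set (Sym2 V)} {U : Set V}
    (hQ : Q ⊆ U.sym2) (hU : ∀ u ∈ U, ∀ v ∈ U, (fromEdgeSet Q).Reachable u v) :
    U.ncard ≤ Q.ncard + 1 := by
  rcases U.eq_empty_or_nonempty with rfl | ⟨u₀, hu₀⟩
  · simp
  have hwalk : ∀ {u v : V} (w : (fromEdgeSet Q).Walk u v), v ∈ U → ∀ x ∈ w.support, x ∈ U := by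
    intro u v w hv x hx
    rcases Walk.mem_support_iff_exists_mem_edges.mp hx with rfl | ⟨e, he, hxe⟩
    · exact hv
    · have heQ : e ∈ Q := ((edgeSet_fromEdgeSet Q).subset (w.edges_subset_edgeSet he)).1
      exact Set.mem_sym2_iff_subset.mp (hQ heQ) hxe
  have hconn : ((fromEdgeSet Q).induce U).Connected := by
    rw [connected_iff_exists_forall_reachable]
    refine ⟨⟨u₀, hu₀⟩, fun ⟨v, hv⟩ => ?_⟩
    obtain ⟨w⟩ := hU u₀ hu₀ v hv
    exact ⟨w.induce U (hwalk w hv)⟩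
  have hedges : (fromEdgeSet Q).edgeSet ∩ U.sym2 ⊆ Q := fun e he =>
    ((edgeSet_fromEdgeSet Q).subset he.1).1
  have := hconn.card_vert_le_card_edgeSet_add_one
  rw [natCard_edgeSet_induce, Nat.card_coe_set_eq] at this
  exact this.trans (Nat.add_le_add_right (Set.ncard_le_ncard hedges) 1)

theorem Reachable.of_forall_adj_reachable {H : SimpleGraph V}
    (h : ∀ ⦃u v : V⦄, G.Adj u v → H.Reachable u v) {u v : V} (huv : G.Reachable u v) :
    H.Reachable u v := by
  obtain ⟨w⟩ := huv
  induction w with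
  | nil => rfl
  | cons hadj _ ih => exact (h hadj).trans ih

theorem Reachable.deleteEdges_or {z a : V} (h : G.Reachable z a) (b : V) :
    (G.deleteEdges {s(a, b)}).Reachable z a ∨ (G.deleteEdges {s(a, b)}).Reachable z b := by
  obtain ⟨w⟩ := h
  induction w with
  | nil => exact Or.inl .rfl
  | @cons z z' a hadj _ ih =>
    by_cases hab : s(z, z') = s(a, b)
    · rcases Sym2.eq_iff.mp hab with ⟨rfl, -⟩ | ⟨rfl, -⟩
      · exact Or.inl .rfl
      · exact Or.inr .rfl
    · have hadj' : (G.deleteEdges {s(a, b)}).Adj z z' := by simp [hadj, hab]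
      exact ih.imp hadj'.reachable.trans hadj'.reachable.trans

theorem reachable_deleteEdges_sup_edge {x y : V} {e : Sym2 V} (hxy : G.Reachable x y)
    (hsep : ¬ (G.deleteEdges {e}).Reachable x y) :
    (G.deleteEdges {e} ⊔ edge x y).Reachable = G.Reachable := by
  classical
  obtain ⟨a, b⟩ := e
  set G' := G.deleteEdges {s(a, b)} ⊔ edge x y
  have hne : x ≠ y := by rintro rfl; exact hsep .rfl
  have hxy' : G'.Reachable x y :=
    (((edge_adj ..).mpr ⟨Or.inl ⟨rfl, rfl⟩, hne⟩).reachable).mono le_sup_right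
  obtain ⟨w⟩ := hxy
  have hmem := w.mem_edges_of_not_reachable_deleteEdges hsep
  have hxa : G.Reachable x a := ⟨w.takeUntil a (w.fst_mem_support_of_mem_edges hmem)⟩
  have hab : G'.Reachable a b := by
    rcases hxa.deleteEdges_or b with hx | hx <;>
      rcases (w.reachable.symm.trans hxa).deleteEdges_or b with hy | hy
    · exact absurd (hx.trans hy.symm) hsep
    · exact (hx.symm.mono le_sup_left).trans (hxy'.trans (hy.mono le_sup_left))
    · exact (hy.symm.mono le_sup_left).trans (hxy'.symm.trans (hx.mono le_sup_left))
    · exact absurd (hx.trans hy.symm) hsep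
  ext u v
  constructor
  · refine Reachable.of_forall_adj_reachable fun u v huv => ?_
    rcases huv with huv | huv
    · exact huv.1.reachable
    · rcases ((edge_adj ..).mp huv).1 with ⟨rfl, rfl⟩ | ⟨rfl, rfl⟩
      · exact w.reachable
      · exact w.reachable.symm
  · refine Reachable.of_forall_adj_reachable fun u v huv => ?_
    by_cases he : s(u, v) = s(a, b)
    · rcases Sym2.eq_iff.mp he with ⟨rfl, rfl⟩ | ⟨rfl, rfl⟩
      · exact hab
      · exact hab.symm
    · exact (Adj.reachable (by simp [huv, he])).mono le_sup_left

theorem IsAcyclic.not_reachable_deleteEdges_of_mem_edges (hG : G.IsAcyclic) {x y : V}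
    {p : G.Walk x y} (hp : p.IsPath) {e : Sym2 V} (he : e ∈ p.edges) :
    ¬ (G.deleteEdges {e}).Reachable x y := by
  classical
  rintro ⟨q⟩
  have hq := q.bypass_isPath.mapLe (deleteEdges_le {e})
  have hpq : p = q.bypass.mapLe (deleteEdges_le {e}) :=
    congrArg Subtype.val ((hG.subsingleton_path x y).elim ⟨p, hp⟩ ⟨_, hq⟩)
  rw [hpq, Walk.edges_mapLe_eq_edges] at he
  simpa [edgeSet_deleteEdges] using q.bypass.edges_subset_edgeSet he

theorem fromEdgeSet_insert (s : Set (Sym2 V)) (x y : V) :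
    fromEdgeSet (insert s(x, y) s) = fromEdgeSet s ⊔ edge x y := by
  rw [Set.insert_eq, Set.union_comm, fromEdgeSet_union]
  rfl

end SimpleGraph

open SimpleGraph

theorem IsPseudoforestPartition.ncard_edgeSet_inter_sym2_le {V : Type*} [Finite V]
    {G : SimpleGraph V} {k : ℕ} {P : Fin k → Set (Sym2 V)} (hP : IsPseudoforestPartition G k P)
    (U : Set V) : (G.edgeSet ∩ U.sym2).ncard ≤ k * U.ncard := by
  have hsub : G.edgeSet ∩ U.sym2 ⊆ ⋃ i, (fromEdgeSet (P i)).edgeSet ∩ U.sym2 := by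
    rintro e ⟨heG, heU⟩
    obtain ⟨i, hi⟩ := Set.mem_iUnion.mp (hP.2.2 ▸ heG)
    refine Set.mem_iUnion.mpr ⟨i, ?_, heU⟩
    rw [edgeSet_fromEdgeSet]
    exact ⟨hi, G.not_isDiag_of_mem_edgeSet heG⟩
  calc (G.edgeSet ∩ U.sym2).ncard ≤ ∑ i, ((fromEdgeSet (P i)).edgeSet ∩ U.sym2).ncard :=
        (Set.ncard_le_ncard hsub).trans (Set.ncard_iUnion_le_of_fintype _)
    _ ≤ ∑ _i : Fin k, U.ncard :=
        Finset.sum_le_sum fun i _ => (hP.1 i).ncard_edgeSet_inter_sym2_le U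
    _ = k * U.ncard := by simp

theorem sum_ncard_update {ι α : Type*} [Fintype ι] [DecidableEq ι] (F : ι → Set α) (i : ι)
    (A : Set α) :
    ∑ j, (Function.update F i A j).ncard + (F i).ncard = ∑ j, (F j).ncard + A.ncard := by
  rw [← Finset.add_sum_erase _ _ (Finset.mem_univ i),
    ← Finset.add_sum_erase _ _ (Finset.mem_univ i), Function.update_self,
    Finset.sum_congr rfl fun j hj => by rw [Function.update_of_ne (Finset.ne_of_mem_erase hj)]]
  ring

section NashWilliams

variable {V ι : Type*} {G : SimpleGraph V}

structure IsForestFamily (G : SimpleGraph V) (F : ι → Set (Sym2 V)) : Prop where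
  subset_edgeSet : ∀ i, F i ⊆ G.edgeSet
  isForestSet : ∀ i, IsForestSet (F i)
  pairwise_disjoint : Pairwise fun i j => Disjoint (F i) (F j)

structure IsMaximumForestFamily [Fintype ι] (G : SimpleGraph V) (F : ι → Set (Sym2 V)) :
    Prop where
  isForestFamily : IsForestFamily G F
  sum_ncard_le : ∀ F' : ι → Set (Sym2 V), IsForestFamily G F' →
    ∑ i, (F' i).ncard ≤ ∑ i, (F i).ncard

structure IsUncoveredEdge (G : SimpleGraph V) (F : ι → Set (Sym2 V)) (e : Sym2 V) : Prop where
  mem_edgeSet : e ∈ G.edgeSet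
  notMem : ∀ i, e ∉ F i

theorem exists_isMaximumForestFamily [Finite V] (G : SimpleGraph V) (ι : Type*) [Fintype ι] :
    ∃ F : ι → Set (Sym2 V), IsMaximumForestFamily G F := by
  have : Nonempty {F : ι → Set (Sym2 V) // IsForestFamily G F} :=
    ⟨fun _ => ∅, fun _ => Set.empty_subset _, fun _ => by simp [IsForestSet],
      fun _ _ _ => Set.disjoint_empty _⟩
  obtain ⟨⟨F, hF⟩, hmax⟩ :=
    Finite.exists_max fun F : {F : ι → Set (Sym2 V) // IsForestFamily G F} => ∑ i, (F.1 i).ncard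
  exact ⟨F, hF, fun F' hF' => hmax ⟨F', hF'⟩⟩

theorem IsForestFamily.update [DecidableEq ι] {F : ι → Set (Sym2 V)} (hF : IsForestFamily G F)
    {i : ι} {A : Set (Sym2 V)} (hAG : A ⊆ G.edgeSet) (hA : IsForestSet A)
    (hdisj : ∀ j ≠ i, Disjoint A (F j)) : IsForestFamily G (Function.update F i A) := by
  refine ⟨fun j => ?_, fun j => ?_, fun j k hjk => ?_⟩ <;> simp only [Function.update_apply]
  · split_ifs
    exacts [hAG, hF.subset_edgeSet j]
  · split_ifs
    exacts [hA, hF.isForestSet j]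
  · split_ifs with hj hk hk
    · exact absurd (hj.trans hk.symm) hjk
    · exact hdisj k hk
    · exact (hdisj j hj).symm
    · exact hF.pairwise_disjoint hjk

theorem IsMaximumForestFamily.reachable [Finite V] [Fintype ι] [DecidableEq ι]
    {F : ι → Set (Sym2 V)} (hF : IsMaximumForestFamily G F) {x y : V}
    (hfree : IsUncoveredEdge G F s(x, y)) (i : ι) : (fromEdgeSet (F i)).Reachable x y := by
  by_contra h
  have hA : IsForestSet (insert s(x, y) (F i)) := by
    rw [IsForestSet, fromEdgeSet_insert]
    exact (hF.isForestFamily.isForestSet i).sup_edge_of_not_reachable h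
  have hF' := hF.isForestFamily.update
    (Set.insert_subset hfree.mem_edgeSet (hF.isForestFamily.subset_edgeSet i)) hA
    fun j hj => Set.disjoint_insert_left.mpr
      ⟨hfree.notMem j, hF.isForestFamily.pairwise_disjoint hj.symm⟩
  have := hF.sum_ncard_le _ hF'
  have := sum_ncard_update F i (insert s(x, y) (F i))
  rw [Set.ncard_insert_of_notMem (hfree.notMem i)] at this
  omega

/-- `(F, s(x, y)) ⟶ (F', e)`: the uncovered edge `s(x, y)` enters the forest `F i` in place of an
edge `e` of `F i` that separates `x` from `y` there, and `e` becomes the uncovered edge. -/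
inductive ExchangeStep [DecidableEq ι] :
    (ι → Set (Sym2 V)) × Sym2 V → (ι → Set (Sym2 V)) × Sym2 V → Prop
  | intro (F : ι → Set (Sym2 V)) (i : ι) {x y : V} {e : Sym2 V} (he : e ∈ F i)
      (hsep : ¬ ((fromEdgeSet (F i)).deleteEdges {e}).Reachable x y) :
      ExchangeStep (F, s(x, y)) (Function.update F i (insert s(x, y) (F i \ {e})), e)

theorem ExchangeStep.isMaximumForestFamily [Finite V] [Fintype ι] [DecidableEq ι]
    {S S' : (ι → Set (Sym2 V)) × Sym2 V} (h : ExchangeStep S S')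
    (hS : IsMaximumForestFamily G S.1) (hfree : IsUncoveredEdge G S.1 S.2) :
    IsMaximumForestFamily G S'.1 ∧ IsUncoveredEdge G S'.1 S'.2 := by
  cases h with | @intro F i x y e he hsep =>
  dsimp only at hS hfree ⊢
  obtain ⟨hF, hmax⟩ := hS
  set A := insert s(x, y) (F i \ {e})
  have hA : IsForestSet A := by
    rw [IsForestSet, fromEdgeSet_insert, fromEdgeSet_sdiff]
    exact ((hF.isForestSet i).anti sdiff_le).sup_edge_of_not_reachable hsep
  have hF' : IsForestFamily G (Function.update F i A) :=
    hF.update (Set.insert_subset hfree.mem_edgeSet (Set.sdiff_subset.trans (hF.subset_edgeSet i)))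
      hA fun j hj => Set.disjoint_insert_left.mpr
        ⟨hfree.notMem j, (hF.pairwise_disjoint hj.symm).mono_left Set.sdiff_subset⟩
  have hcard : A.ncard = (F i).ncard := by
    rw [Set.ncard_insert_of_notMem fun h => hfree.notMem i h.1,
      Set.ncard_sdiff_singleton_add_one he]
  refine ⟨⟨hF', fun F'' hF'' => ?_⟩, ⟨hF.subset_edgeSet i he, fun j hj => ?_⟩⟩
  · have := sum_ncard_update F i A
    have := hmax F'' hF''
    omega
  · rcases eq_or_ne j i with rfl | hji
    · rw [Function.update_self] at hj
      rcases hj with hj | hj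
      · exact hfree.notMem j (hj ▸ he)
      · exact hj.2 rfl
    · rw [Function.update_of_ne hji] at hj
      exact Set.disjoint_left.mp (hF.pairwise_disjoint hji.symm) he hj

section Exchange

open Relation

variable [Finite V] [Fintype ι] [DecidableEq ι] {F₀ : ι → Set (Sym2 V)} {e₀ : Sym2 V}

variable (F₀ e₀) in
def exchangeEdges : Set (Sym2 V) :=
  {e | ∃ F, ReflTransGen ExchangeStep (F₀, e₀) (F, e)}

theorem isMaximumForestFamily_of_reflTransGen (hF₀ : IsMaximumForestFamily G F₀)
    (he₀ : IsUncoveredEdge G F₀ e₀) {S : (ι → Set (Sym2 V)) × Sym2 V}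
    (h : ReflTransGen ExchangeStep (F₀, e₀) S) :
    IsMaximumForestFamily G S.1 ∧ IsUncoveredEdge G S.1 S.2 := by
  induction h with
  | refl => exact ⟨hF₀, he₀⟩
  | tail _ hstep ih => exact hstep.isMaximumForestFamily ih.1 ih.2

theorem reachable_inter_exchangeEdges (hF₀ : IsMaximumForestFamily G F₀)
    (he₀ : IsUncoveredEdge G F₀ e₀) {F : ι → Set (Sym2 V)} {x y : V}
    (h : ReflTransGen ExchangeStep (F₀, e₀) (F, s(x, y))) (i : ι) :
    (fromEdgeSet (F i ∩ exchangeEdges F₀ e₀)).Reachable x y := by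
  obtain ⟨hF, hfree⟩ := isMaximumForestFamily_of_reflTransGen hF₀ he₀ h
  obtain ⟨p, hp⟩ := (hF.reachable hfree i).exists_isPath
  refine ⟨p.transfer _ fun e he => ?_⟩
  have he' := p.edges_subset_edgeSet he
  rw [edgeSet_fromEdgeSet] at he' ⊢
  exact ⟨⟨he'.1, _, h.tail (.intro F i he'.1
    ((hF.isForestFamily.isForestSet i).not_reachable_deleteEdges_of_mem_edges hp he))⟩, he'.2⟩

theorem reachable_inter_exchangeEdges_eq (hF₀ : IsMaximumForestFamily G F₀)
    (he₀ : IsUncoveredEdge G F₀ e₀) {S : (ι → Set (Sym2 V)) × Sym2 V}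
    (h : ReflTransGen ExchangeStep (F₀, e₀) S) (i : ι) :
    (fromEdgeSet (S.1 i ∩ exchangeEdges F₀ e₀)).Reachable =
      (fromEdgeSet (F₀ i ∩ exchangeEdges F₀ e₀)).Reachable := by
  induction h with
  | refl => rfl
  | tail hprev hstep ih =>
    rw [← ih]
    cases hstep with | @intro F j x y e he hsep =>
    dsimp only
    rcases eq_or_ne i j with rfl | hij
    · have hxyD : s(x, y) ∈ exchangeEdges F₀ e₀ := ⟨F, hprev⟩
      have hset : insert s(x, y) (F i \ {e}) ∩ exchangeEdges F₀ e₀ =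
          insert s(x, y) ((F i ∩ exchangeEdges F₀ e₀) \ {e}) := by
        ext d
        constructor
        · rintro ⟨rfl | ⟨hd, hde⟩, hdD⟩
          exacts [.inl rfl, .inr ⟨⟨hd, hdD⟩, hde⟩]
        · rintro (rfl | ⟨⟨hd, hdD⟩, hde⟩)
          exacts [⟨.inl rfl, hxyD⟩, ⟨.inr ⟨hd, hde⟩, hdD⟩]
      rw [Function.update_self, hset, fromEdgeSet_insert, fromEdgeSet_sdiff]
      exact reachable_deleteEdges_sup_edge (reachable_inter_exchangeEdges hF₀ he₀ hprev i)
        fun hr => hsep (hr.mono (deleteEdges_mono (fromEdgeSet_mono Set.inter_subset_left)))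
    · rw [Function.update_of_ne hij]

theorem exchangeEdges_subset_sym2 {x₀ y₀ : V} (hF₀ : IsMaximumForestFamily G F₀)
    (he₀ : IsUncoveredEdge G F₀ s(x₀, y₀)) :
    exchangeEdges F₀ s(x₀, y₀) ⊆
      {v | (fromEdgeSet (exchangeEdges F₀ s(x₀, y₀))).Reachable x₀ v}.sym2 := by
  classical
  set D := exchangeEdges F₀ s(x₀, y₀)
  suffices ∀ S, ReflTransGen ExchangeStep (F₀, s(x₀, y₀)) S →
      S.2 ∈ {v | (fromEdgeSet D).Reachable x₀ v}.sym2 from fun e ⟨_, h⟩ => this _ h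
  intro S h
  induction h with
  | refl =>
    have hadj : (fromEdgeSet D).Adj x₀ y₀ :=
      (fromEdgeSet_adj _).mpr ⟨⟨F₀, .refl⟩, G.ne_of_adj he₀.mem_edgeSet⟩
    exact ⟨.rfl, hadj.reachable⟩
  | tail hprev hstep ih =>
    cases hstep with | @intro F i x y e he hsep =>
    obtain ⟨w⟩ := reachable_inter_exchangeEdges hF₀ he₀ hprev i
    have hle : fromEdgeSet (F i ∩ D) ≤ fromEdgeSet (F i) := fromEdgeSet_mono Set.inter_subset_left
    have hmem : e ∈ w.edges := by
      simpa using (w.mapLe hle).mem_edges_of_not_reachable_deleteEdges hsep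
    rw [Set.mem_sym2_iff_subset]
    intro v hv
    have hvw : v ∈ w.support := Walk.mem_support_iff_exists_mem_edges.mpr (.inr ⟨e, hmem, hv⟩)
    exact (Set.mk_mem_sym2_iff.mp ih).1.trans
      ((w.takeUntil v hvw).reachable.mono (fromEdgeSet_mono Set.inter_subset_right))

end Exchange

theorem mul_lt_ncard_of_forall_reachable [Finite V] [Fintype ι] {E : Set (Sym2 V)}
    {Q : ι → Set (Sym2 V)} {U : Set V} {e₀ : Sym2 V} (hQ : ∀ i, Q i ⊆ E ∩ U.sym2)
    (hdisj : Pairwise fun i j => Disjoint (Q i) (Q j))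
    (hconn : ∀ i, ∀ u ∈ U, ∀ v ∈ U, (fromEdgeSet (Q i)).Reachable u v)
    (he₀ : e₀ ∈ E ∩ U.sym2) (he₀Q : ∀ i, e₀ ∉ Q i) :
    Fintype.card ι * (U.ncard - 1) < (E ∩ U.sym2).ncard :=
  calc Fintype.card ι * (U.ncard - 1) ≤ ∑ i, (Q i).ncard := by
        rw [← smul_eq_mul, ← Finset.card_univ, ← Finset.sum_const]
        exact Finset.sum_le_sum fun i _ => Nat.sub_le_of_le_add
          (ncard_le_ncard_add_one_of_reachable (fun e he => (hQ i he).2) (hconn i))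
    _ = (⋃ i, Q i).ncard := by
        rw [Set.ncard_iUnion_of_finite (fun _ => Set.toFinite _) hdisj, finsum_eq_sum_of_fintype]
    _ < (insert e₀ (⋃ i, Q i)).ncard := by
        rw [Set.ncard_insert_of_notMem (by simpa using he₀Q)]
        omega
    _ ≤ (E ∩ U.sym2).ncard := Set.ncard_le_ncard (Set.insert_subset he₀ (Set.iUnion_subset hQ))

theorem exists_forest_partition_of_ncard_le [Finite V] [Fintype ι]
    (hden : ∀ U : Set V, U.Nonempty →
      (G.edgeSet ∩ U.sym2).ncard ≤ Fintype.card ι * (U.ncard - 1)) :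
    ∃ F : ι → Set (Sym2 V), (∀ i, IsForestSet (F i)) ∧
      (Pairwise fun i j => Disjoint (F i) (F j)) ∧ ⋃ i, F i = G.edgeSet := by
  classical
  obtain ⟨F₀, hF₀⟩ := exists_isMaximumForestFamily G ι
  obtain ⟨hF₀G, hF₀f, hF₀disj⟩ := hF₀.isForestFamily
  refine ⟨F₀, hF₀f, hF₀disj, (Set.iUnion_subset hF₀G).antisymm fun e₀ he₀ => ?_⟩
  by_contra hcov
  have hfree : IsUncoveredEdge G F₀ e₀ := ⟨he₀, fun i h => hcov (Set.mem_iUnion_of_mem i h)⟩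
  obtain ⟨x₀, y₀⟩ := e₀
  set D := exchangeEdges F₀ s(x₀, y₀)
  set U := {v | (fromEdgeSet D).Reachable x₀ v}
  have hDU : D ⊆ U.sym2 := exchangeEdges_subset_sym2 hF₀ hfree
  have hconn : ∀ i, ∀ u ∈ U, ∀ v ∈ U, (fromEdgeSet (F₀ i ∩ D)).Reachable u v := by
    intro i
    have hx₀ : ∀ v ∈ U, (fromEdgeSet (F₀ i ∩ D)).Reachable x₀ v := fun v hv =>
      Reachable.of_forall_adj_reachable (fun a b hab => by
        obtain ⟨⟨F, hF⟩, -⟩ := (fromEdgeSet_adj _).mp hab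
        rw [← reachable_inter_exchangeEdges_eq hF₀ hfree hF i]
        exact reachable_inter_exchangeEdges hF₀ hfree hF i) hv
    exact fun u hu v hv => (hx₀ u hu).symm.trans (hx₀ v hv)
  refine (hden U ⟨x₀, .rfl⟩).not_gt (mul_lt_ncard_of_forall_reachable
    (fun i e he => ⟨hF₀G i he.1, hDU he.2⟩)
    (fun i j hij => (hF₀disj hij).mono Set.inter_subset_left Set.inter_subset_left)
    hconn ⟨he₀, hDU ⟨F₀, .refl⟩⟩ fun i he => hfree.notMem i he.1)

end NashWilliams

theorem le_mul_sub_one_of_le_mul_of_le_choose {k n u m : ℕ} (hkn : 4 * k ≤ 3 * n)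
    (hk : m ≤ k * u) (hu : m ≤ u.choose 2) : m ≤ n * (u - 1) := by
  rcases le_or_gt u 3 with hu3 | hu3
  · interval_cases u <;> simp [Nat.choose] at hu ⊢ <;> omega
  · have : 3 * (k * u) ≤ 3 * (n * (u - 1)) := by
      obtain ⟨v, rfl⟩ := Nat.exists_eq_add_of_lt hu3
      rw [show 3 + v + 1 - 1 = 3 + v by omega]
      nlinarith
    omega

theorem pseudoforests_to_four_thirds_forests_general {V : Type*} [Fintype V]
    (G : SimpleGraph V) (k : ℕ) (P : Fin k → Set (Sym2 V))
    (hP : IsPseudoforestPartition G k P) :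
    ∃ F : Fin ⌈(4 * k : ℚ) / 3⌉₊ → Set (Sym2 V),
      IsForestPartition G ⌈(4 * k : ℚ) / 3⌉₊ F := by
  have hkn : 4 * k ≤ 3 * ⌈(4 * k : ℚ) / 3⌉₊ := by
    have := Nat.le_ceil ((4 * k : ℚ) / 3)
    exact_mod_cast (by linarith : (4 * k : ℚ) ≤ 3 * ⌈(4 * k : ℚ) / 3⌉₊)
  refine exists_forest_partition_of_ncard_le fun U _ => ?_
  rw [Fintype.card_fin]
  exact le_mul_sub_one_of_le_mul_of_le_choose hkn (hP.ncard_edgeSet_inter_sym2_le U)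
    (ncard_edgeSet_inter_sym2_le_choose_two G U)

/-- If the edge set of a finite simple graph is partitioned into `k` pseudoforests, then
it can be partitioned into `⌈4k/3⌉` forests. -/
theorem pseudoforests_to_four_thirds_forests {V : Type*} [Fintype V] [DecidableEq V]
    (G : SimpleGraph V) (k : ℕ) (P : Fin k → Set (Sym2 V))
    (hP : IsPseudoforestPartition G k P) :
    ∃ F : Fin ⌈(4 * k : ℚ) / 3⌉₊ → Set (Sym2 V),
      IsForestPartition G ⌈(4 * k : ℚ) / 3⌉₊ F :=
  pseudoforests_to_four_thirds_forests_general G k P hP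
end

section
/- Let G = (V,E) be a finite simple graph with maximum density d*(G) > 1/2. Then G admits an orientation in which every vertex has indegree at most ⌈2·d*(G)⌉ − 1. -/
open SimpleGraph

/-- `D` is an orientation of `G`: every directed edge comes from an edge of `G`, and
every edge of `G` receives exactly one of its two possible directions. -/
def IsOrientation {V : Type*} (G : SimpleGraph V) (D : V → V → Prop) : Prop :=
  ∀ u v : V, (D u v → G.Adj u v) ∧ (G.Adj u v → (D u v ↔ ¬ D v u))

/-- The indegree of `v` in the orientation `D`: the number of edges directed towards `v`. -/
noncomputable def inDeg {V : Type*} (D : V → V → Prop) (v : V) : ℕ :=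
  {u | D u v}.ncard

/-- The maximum density `d*(G)`: the maximum over nonempty vertex sets `S` of
`|E_S| / |S|`, where `E_S` is the set of edges with both endpoints in `S`. -/
noncomputable def maxDensity {V : Type*} [Fintype V] [DecidableEq V]
    (G : SimpleGraph V) [DecidableRel G.Adj] : ℝ :=
  ⨆ S : {S : Finset V // S.Nonempty},
    ((G.edgeFinset.filter fun e => e ∈ S.val.sym2).card : ℝ) / (S.val.card : ℝ)

/-- Every finite simple graph `G` with maximum density `d*(G) > 1/2` admits an
orientation in which every vertex has indegree at most `⌈2 d*(G)⌉ - 1`. -/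
theorem exists_orientation_indegree_le_ceil_two_density_sub_one {V : Type*} [Fintype V]
    [DecidableEq V] (G : SimpleGraph V) [DecidableRel G.Adj]
    (h : (1 : ℝ) / 2 < maxDensity G) :
    ∃ D : V → V → Prop, IsOrientation G D ∧
      ∀ v : V, (inDeg D v : ℤ) ≤ ⌈(2 : ℝ) * maxDensity G⌉ - 1 := by
  classical
  set d := maxDensity G with hd
  have h2 : (1 : ℝ) < 2 * d := by linarith
  have hceil2 : 2 ≤ ⌈(2 : ℝ) * d⌉ := by
    by_contra hc
    push_neg at hc
    have h1 : ⌈(2 : ℝ) * d⌉ ≤ 1 := by omega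
    have := Int.ceil_le.mp h1
    push_cast at this
    linarith
  set k : ℕ := (⌈(2 : ℝ) * d⌉ - 1).toNat with hk
  have hkZ : (k : ℤ) = ⌈(2 : ℝ) * d⌉ - 1 := Int.toNat_of_nonneg (by omega)
  have hceilR : ((⌈(2 : ℝ) * d⌉ : ℤ) : ℝ) ≥ 2 * d := Int.le_ceil _
  have hkR : (k : ℝ) = ((⌈(2 : ℝ) * d⌉ : ℤ) : ℝ) - 1 := by
    rw [show ((k : ℝ)) = (((k : ℤ)) : ℝ) by push_cast; ring, hkZ]; push_cast; ring
  have hdk : d ≤ (k : ℝ) := by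
    rcases le_or_gt 1 d with h1 | h1
    · rw [hkR]; linarith
    · have : (2 : ℝ) ≤ ((⌈(2 : ℝ) * d⌉ : ℤ) : ℝ) := by exact_mod_cast hceil2
      rw [hkR]; linarith
  -- density bound on every nonempty S
  have hdens : ∀ S : Finset V, S.Nonempty →
      ((G.edgeFinset.filter fun e => e ∈ S.sym2).card : ℝ) ≤ d * S.card := by
    intro S hS
    have hb : BddAbove (Set.range fun S : {S : Finset V // S.Nonempty} =>
        ((G.edgeFinset.filter fun e => e ∈ S.val.sym2).card : ℝ) / (S.val.card : ℝ)) :=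
      (Set.finite_range _).bddAbove
    have hle : ((G.edgeFinset.filter fun e => e ∈ S.sym2).card : ℝ) / (S.card : ℝ) ≤ d :=
      le_ciSup hb (⟨S, hS⟩ : {S : Finset V // S.Nonempty})
    have hpos : (0 : ℝ) < S.card := by exact_mod_cast Finset.card_pos.mpr hS
    rw [div_le_iff₀ hpos] at hle
    exact hle
  -- Hall's theorem setup
  set t : {e : Sym2 V // e ∈ G.edgeFinset} → Finset (V × Fin k) :=
    fun e => Finset.univ.filter (fun p => p.1 ∈ e.val) with ht
  have hall : ∀ s : Finset {e : Sym2 V // e ∈ G.edgeFinset}, s.card ≤ (s.biUnion t).card := by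
    intro s
    rcases s.eq_empty_or_nonempty with rfl | hs
    · simp
    set S : Finset V := s.biUnion (fun e => Finset.univ.filter (fun v => v ∈ e.val)) with hS
    have hSne : S.Nonempty := by
      obtain ⟨e, he⟩ := hs
      refine ⟨e.val.out.1, Finset.mem_biUnion.mpr ⟨e, he, ?_⟩⟩
      simp [Sym2.out_fst_mem]
    have hbi : s.biUnion t = S ×ˢ (Finset.univ : Finset (Fin k)) := by
      ext ⟨v, i⟩
      simp only [ht, hS, Finset.mem_biUnion, Finset.mem_product, Finset.mem_filter,
        Finset.mem_univ, true_and, and_true]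
    have hcard1 : s.card ≤ (G.edgeFinset.filter fun e => e ∈ S.sym2).card := by
      apply Finset.card_le_card_of_injOn (fun e => e.val)
      · intro e he
        refine Finset.mem_filter.mpr ⟨e.2, ?_⟩
        rw [Finset.mem_sym2_iff]
        intro a ha
        exact Finset.mem_biUnion.mpr ⟨e, he, by simp [ha]⟩
      · intro a _ b _ hab
        exact Subtype.ext hab
    have hcard2 : ((G.edgeFinset.filter fun e => e ∈ S.sym2).card : ℝ) ≤ (k : ℝ) * S.card := by
      calc ((G.edgeFinset.filter fun e => e ∈ S.sym2).card : ℝ)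
          ≤ d * S.card := hdens S hSne
        _ ≤ (k : ℝ) * S.card := mul_le_mul_of_nonneg_right hdk (Nat.cast_nonneg _)
    have : (s.card : ℝ) ≤ (k : ℝ) * S.card := le_trans (by exact_mod_cast hcard1) hcard2
    have hnat : s.card ≤ k * S.card := by exact_mod_cast this
    rw [hbi, Finset.card_product]
    simpa [mul_comm] using hnat
  obtain ⟨f, hfinj, hft⟩ := (Finset.all_card_le_biUnion_card_iff_existsInjective' t).mp hall
  have hf1 : ∀ e : {e : Sym2 V // e ∈ G.edgeFinset}, (f e).1 ∈ e.val := by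
    intro e
    have := hft e
    simp [ht] at this
    exact this
  -- the orientation
  set D : V → V → Prop :=
    fun u v => ∃ hm : s(u, v) ∈ G.edgeFinset, (f ⟨s(u, v), hm⟩).1 = v with hD
  refine ⟨D, ?_, ?_⟩
  · intro u v
    constructor
    · rintro ⟨hm, -⟩
      exact (mem_edgeFinset.mp hm)
    · intro hadj
      have hm : s(u, v) ∈ G.edgeFinset := mem_edgeFinset.mpr hadj
      have hm' : s(v, u) ∈ G.edgeFinset := by rwa [Sym2.eq_swap]
      have hee : (⟨s(v, u), hm'⟩ : {e : Sym2 V // e ∈ G.edgeFinset}) = ⟨s(u, v), hm⟩ := Subtype.ext (Sym2.eq_swap)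
      have hmem := hf1 ⟨s(u, v), hm⟩
      rw [Sym2.mem_iff] at hmem
      have hne : u ≠ v := hadj.ne
      constructor
      · rintro ⟨hm2, hval⟩ ⟨hm3, hval'⟩
        have h1 : (f ⟨s(u, v), hm⟩).1 = v := hval
        have h2 : (f ⟨s(u, v), hm⟩).1 = u := by
          rw [← hee]; exact hval'
        exact hne (h2 ▸ h1)
      · intro hnd
        refine ⟨hm, ?_⟩
        rcases hmem with h1 | h1
        · exact absurd ⟨hm', by rw [hee]; exact h1⟩ hnd
        · exact h1
  · -- indegree bound
    intro v
    have hcard : inDeg D v ≤ k := by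
      have hmemp : ∀ u : {u | D u v}, s(u.1, v) ∈ G.edgeFinset := fun u => u.2.choose
      set g : {u | D u v} → Fin k := fun u => (f ⟨s(u.1, v), hmemp u⟩).2 with hg
      have hginj : Function.Injective g := by
        intro u u' huu
        have h1 : (f ⟨s(u.1, v), hmemp u⟩).1 = v := u.2.choose_spec
        have h2 : (f ⟨s(u'.1, v), hmemp u'⟩).1 = v := u'.2.choose_spec
        have hfeq : f ⟨s(u.1, v), hmemp u⟩ = f ⟨s(u'.1, v), hmemp u'⟩ :=
          Prod.ext (h1.trans h2.symm) huu
        have := hfinj hfeq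
        have hsy : s(u.1, v) = s(u'.1, v) := congrArg Subtype.val this
        exact Subtype.ext (Sym2.congr_left.mp hsy)
      calc inDeg D v = Nat.card {u | D u v} := (Nat.card_coe_set_eq _).symm
        _ ≤ Nat.card (Fin k) := Nat.card_le_card_of_injective g hginj
        _ = k := by simp
    calc (inDeg D v : ℤ) ≤ (k : ℤ) := by exact_mod_cast hcard
      _ = ⌈(2 : ℝ) * d⌉ - 1 := hkZ
end
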